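/- arXiv:1706.05709 — 7 statements merged into one kernel-verified Lean document; each statement's English description precedes it below -/
import Mathlib

section
/- Let A be an N×N complex matrix with Toeplitz decomposition A = H + iK such that H is positive definite (so A is strictly dissipative and, in particular, invertible). If p ∈ ℂ^N is a nonzero vector, θ ∈ (0, 2π), and −A⁻¹A* p = e^{iθ} p, then ⟨p, K p⟩ = cot(θ/2) · ⟨p, H p⟩ (both inner products being real numbers since H and K are Hermitian). -/
open Matrix
open scoped ComplexOrder

/-!
A strictly dissipative `A` is invertible: a kernel vector `v` would give `⟨v, H v⟩ = Re ⟨v, A v⟩ = 0`.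
So the eigen-relation reads `A* p = -e^{iθ} A p`, and with `a = ⟨p, A p⟩` we get
`⟨p, K p⟩ = (1 + e^{iθ}) a / (2i)` and `⟨p, H p⟩ = (1 - e^{iθ}) a / 2`. The half-angle identity
`1 + e^{iθ} = i cot(θ/2) (1 - e^{iθ})` relates the two.
-/

namespace Complex

theorem one_add_exp_mul_I_mul_sin_half (z : ℂ) :
    (1 + exp (z * I)) * sin (z / 2) = I * cos (z / 2) * (1 - exp (z * I)) := by
  have hsq : exp (z * I) = (cos (z / 2) + sin (z / 2) * I) ^ 2 := by
    rw [← exp_mul_I, ← exp_nat_mul]; ring_nf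
  rw [hsq]
  linear_combination (sin (z / 2) ^ 3 + 2 * cos (z / 2) ^ 2 * sin (z / 2)
      + cos (z / 2) * sin (z / 2) ^ 2 * I) * I_sq
    + (I * cos (z / 2) - sin (z / 2)) * sin_sq_add_cos_sq (z / 2)

theorem one_add_exp_mul_I_eq_I_mul_cot_half {θ : ℝ} (hθ : Real.sin (θ / 2) ≠ 0) :
    1 + exp (θ * I) = I * Real.cot (θ / 2) * (1 - exp (θ * I)) := by
  have hsin : sin (θ / 2) ≠ 0 := by exact_mod_cast hθ
  rw [ofReal_cot, cot_eq_cos_div_sin, ofReal_div, ofReal_ofNat]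
  field_simp
  linear_combination one_add_exp_mul_I_mul_sin_half θ

end Complex

namespace Matrix

variable {n : Type*} [Fintype n]

theorem star_dotProduct_conjTranspose_mulVec {R : Type*} [CommSemiring R] [StarRing R]
    (A : Matrix n n R) (x : n → R) : star x ⬝ᵥ Aᴴ *ᵥ x = star (star x ⬝ᵥ A *ᵥ x) := by
  rw [mulVec_conjTranspose, star_dotProduct_star, ← dotProduct_mulVec]

theorem isUnit_det_of_posDef_realPart {𝕜 : Type*} [RCLike 𝕜] [DecidableEq n]
    {A : Matrix n n 𝕜} (hA : ((2 : 𝕜)⁻¹ • (A + Aᴴ)).PosDef) : IsUnit A.det := by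
  rw [isUnit_iff_ne_zero]
  intro hdet
  obtain ⟨v, hv, hAv⟩ := exists_mulVec_eq_zero_iff.2 hdet
  have hpos := hA.dotProduct_mulVec_pos hv
  rw [smul_mulVec, add_mulVec, dotProduct_smul, dotProduct_add,
    star_dotProduct_conjTranspose_mulVec, hAv] at hpos
  simp at hpos

theorem mulVec_eq_neg_smul_mulVec_of_neg_inv_mul_mulVec {R : Type*} [CommRing R]
    [DecidableEq n] {A B : Matrix n n R} (hA : IsUnit A.det) {p : n → R} {c : R}
    (h : (-(A⁻¹ * B)) *ᵥ p = c • p) : B *ᵥ p = -(c • A *ᵥ p) := by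
  rw [← mulVec_smul, ← h, neg_mulVec, mulVec_neg, mulVec_mulVec, ← Matrix.mul_assoc,
    mul_nonsing_inv A hA, Matrix.one_mul, neg_neg]

open Complex in
theorem star_dotProduct_imaginaryPart_mulVec_eq_cot_half_mul (A : Matrix n n ℂ) {p : n → ℂ}
    {θ : ℝ} (hθ : Real.sin (θ / 2) ≠ 0) (h : Aᴴ *ᵥ p = -(exp (θ * I) • A *ᵥ p)) :
    star p ⬝ᵥ ((2 * I)⁻¹ • (A - Aᴴ)) *ᵥ p
      = Real.cot (θ / 2) * (star p ⬝ᵥ ((2 : ℂ)⁻¹ • (A + Aᴴ)) *ᵥ p) := by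
  have h2I : (2 * I)⁻¹ = -I / 2 := by rw [mul_inv, inv_I]; ring
  simp only [smul_mulVec, sub_mulVec, add_mulVec, dotProduct_smul, dotProduct_sub,
    dotProduct_add, h, dotProduct_neg, smul_eq_mul, h2I]
  linear_combination (-I / 2 * (star p ⬝ᵥ A *ᵥ p)) * one_add_exp_mul_I_eq_I_mul_cot_half hθ
    + (Real.cot (θ / 2) * (star p ⬝ᵥ A *ᵥ p) * (exp (θ * I) - 1) / 2) * I_sq

end Matrix

theorem stmt_0_general {N : ℕ} (A H K : Matrix (Fin N) (Fin N) ℂ)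
    (hH : H = (2 : ℂ)⁻¹ • (A + Aᴴ))
    (hK : K = (2 * Complex.I)⁻¹ • (A - Aᴴ))
    (hpos : H.PosDef)
    (p : Fin N → ℂ)
    (θ : ℝ) (hθ : θ ∈ Set.Ioo (0 : ℝ) (2 * Real.pi))
    (heig : (-(A⁻¹ * Aᴴ)).mulVec p = Complex.exp (θ * Complex.I) • p) :
    star p ⬝ᵥ K.mulVec p = (Real.cot (θ / 2) : ℂ) * (star p ⬝ᵥ H.mulVec p) := by
  subst hH hK
  have hsin : Real.sin (θ / 2) ≠ 0 :=
    (Real.sin_pos_of_pos_of_lt_pi (by linarith [hθ.1]) (by linarith [hθ.2])).ne'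
  have hadj : Aᴴ *ᵥ p = -(Complex.exp (θ * Complex.I) • A *ᵥ p) :=
    mulVec_eq_neg_smul_mulVec_of_neg_inv_mul_mulVec (isUnit_det_of_posDef_realPart hpos) heig
  exact star_dotProduct_imaginaryPart_mulVec_eq_cot_half_mul A hsin hadj

/-- For a strictly dissipative matrix `A = H + iK` (Toeplitz
decomposition, `H` positive definite), if `p ≠ 0`, `θ ∈ (0, 2π)` and
`−A⁻¹A* p = e^{iθ} p`, then `⟨p, K p⟩ = cot(θ/2) · ⟨p, H p⟩`. -/
theorem stmt_0 {N : ℕ} (A H K : Matrix (Fin N) (Fin N) ℂ)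
    (hH : H = (2 : ℂ)⁻¹ • (A + Aᴴ))
    (hK : K = (2 * Complex.I)⁻¹ • (A - Aᴴ))
    (hpos : H.PosDef)
    (p : Fin N → ℂ) (hp : p ≠ 0)
    (θ : ℝ) (hθ : θ ∈ Set.Ioo (0 : ℝ) (2 * Real.pi))
    (heig : (-(A⁻¹ * Aᴴ)).mulVec p = Complex.exp (θ * Complex.I) • p) :
    star p ⬝ᵥ K.mulVec p = (Real.cot (θ / 2) : ℂ) * (star p ⬝ᵥ H.mulVec p) :=
  stmt_0_general A H K hH hK hpos p θ hθ heig
end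

section
/- For n ≥ 1, α_0, …, α_{n−1} in the open unit disk and τ_n on the unit circle, the matrix G(α_0,…,α_{n−1},τ_n) is unitary, its subdiagonal entries are G_{k+1,k} = ρ_0-free positive numbers, namely G_{k+1,k} = ρ_k = (1 − |α_k|²)^{1/2} > 0 for k = 0, …, n−1, and all entries strictly below the first subdiagonal vanish; that is, G(α_0,…,α_{n−1},τ_n) is a unitary upper Hessenberg matrix with positive subdiagonal elements. -/
/-!
`Θ(α)` is unitary because `ρ² + |α|² = 1`, so every `G_j` is unitary, and so is the diagonal
`G_n` since `|τ_n| = 1`. Right multiplication by `G_j` only recombines columns `j` and `j + 1`.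
Hence, by induction on `m`, the rows of `G_0 ⋯ G_{m-1}` below row `m` are still rows of the
identity, and strictly below its diagonal the only nonzero entries are `ρ_l` at `(l + 1, l)`,
`l < m`. The final diagonal factor `G_n` only rescales the last column.
-/

open Matrix
open scoped ComplexOrder

/-- `ρ(α) = (1 - |α|²)^{1/2}` -/
noncomputable def rho (α : ℂ) : ℝ := Real.sqrt (1 - ‖α‖ ^ 2)

/-- The factor `G_j = diag(I_j, Θ(α_j), I_{n-j-1})` for `0 ≤ j ≤ n-1`, where
`Θ(α) = [[conj α, ρ], [ρ, -α]]`. -/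
noncomputable def Gstep (n j : ℕ) (α : ℂ) : Matrix (Fin (n + 1)) (Fin (n + 1)) ℂ :=
  Matrix.of fun k l =>
    if k.val = j ∧ l.val = j then (starRingEnd ℂ) α
    else if k.val = j ∧ l.val = j + 1 then (rho α : ℂ)
    else if k.val = j + 1 ∧ l.val = j then (rho α : ℂ)
    else if k.val = j + 1 ∧ l.val = j + 1 then -α
    else if k = l then 1 else 0

/-- The factor `G_n = diag(I_n, conj τ_n)`. -/
noncomputable def Glast (n : ℕ) (τ : ℂ) : Matrix (Fin (n + 1)) (Fin (n + 1)) ℂ :=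
  Matrix.of fun k l => if k = l then (if k.val = n then (starRingEnd ℂ) τ else 1) else 0

/-- `G(α_0, …, α_{n-1}, τ_n) := G_0 G_1 ⋯ G_n`. -/
noncomputable def Gmat (n : ℕ) (α : ℕ → ℂ) (τ : ℂ) : Matrix (Fin (n + 1)) (Fin (n + 1)) ℂ :=
  (((List.range n).map fun j => Gstep n j (α j)).prod) * Glast n τ

lemma rho_conj (β : ℂ) : rho (starRingEnd ℂ β) = rho β := by
  simp [rho]

lemma rho_pos {β : ℂ} (hβ : ‖β‖ < 1) : 0 < rho β :=
  Real.sqrt_pos.mpr (by nlinarith [norm_nonneg β])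

lemma rho_mul_rho_add_conj_mul_self {β : ℂ} (hβ : ‖β‖ < 1) :
    (rho β : ℂ) * rho β + starRingEnd ℂ β * β = 1 := by
  have hρ : rho β * rho β = 1 - ‖β‖ ^ 2 := Real.mul_self_sqrt (by nlinarith [norm_nonneg β])
  rw [mul_comm _ β, Complex.mul_conj, Complex.normSq_eq_norm_sq, ← Complex.ofReal_mul, hρ]
  push_cast; ring

lemma mul_Gstep_apply {n j : ℕ} (hj : j < n) (β : ℂ) (P : Matrix (Fin (n + 1)) (Fin (n + 1)) ℂ)
    (k l : Fin (n + 1)) :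
    (P * Gstep n j β) k l =
      if l.val = j then
        P k ⟨j, Nat.lt_succ_of_lt hj⟩ * starRingEnd ℂ β + P k ⟨j + 1, Nat.succ_lt_succ hj⟩ * rho β
      else if l.val = j + 1 then
        P k ⟨j, Nat.lt_succ_of_lt hj⟩ * rho β - P k ⟨j + 1, Nat.succ_lt_succ hj⟩ * β
      else P k l := by
  have hsupp : ∀ t : Fin (n + 1),
      t ≠ ⟨j, Nat.lt_succ_of_lt hj⟩ ∧ t ≠ ⟨j + 1, Nat.succ_lt_succ hj⟩ →
      (l.val = j ∨ l.val = j + 1) → P k t * Gstep n j β t l = 0 := by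
    rintro t ⟨ht₁, ht₂⟩ hl
    simp only [Ne, Fin.ext_iff] at ht₁ ht₂
    have htl : t ≠ l := by rintro rfl; omega
    simp [Gstep, ht₁, ht₂, htl]
  rw [mul_apply]
  split_ifs with h₁ h₂
  · rw [Fintype.sum_eq_add _ _ (by simp [Fin.ext_iff]) fun t ht => hsupp t ht (.inl h₁)]
    simp [Gstep, h₁]
  · rw [Fintype.sum_eq_add _ _ (by simp [Fin.ext_iff]) fun t ht => hsupp t ht (.inr h₂)]
    simp [Gstep, h₂, sub_eq_add_neg]
  · rw [Fintype.sum_eq_single l fun t ht => ?_]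
    · simp [Gstep, h₁, h₂]
    · simp [Gstep, h₁, h₂, ht]

lemma star_Gstep (n j : ℕ) (β : ℂ) : star (Gstep n j β) = Gstep n j (starRingEnd ℂ β) := by
  ext k l
  simp only [star_apply, Gstep, of_apply, rho_conj, Fin.ext_iff]
  split_ifs <;> first | omega | simp

lemma Gstep_mem_unitaryGroup {n j : ℕ} (hj : j < n) {β : ℂ} (hβ : ‖β‖ < 1) :
    Gstep n j β ∈ unitaryGroup (Fin (n + 1)) ℂ := by
  have hρ := rho_mul_rho_add_conj_mul_self hβ
  rw [mem_unitaryGroup_iff, star_Gstep]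
  ext k l
  rw [mul_Gstep_apply hj, one_apply]
  simp only [Complex.conj_conj, rho_conj, Gstep, of_apply, Fin.ext_iff, and_true]
  split_ifs <;> first | omega | linear_combination hρ | ring

lemma Glast_eq_diagonal (n : ℕ) (τ : ℂ) :
    Glast n τ = diagonal fun k : Fin (n + 1) => if k.val = n then starRingEnd ℂ τ else 1 := by
  ext k l
  by_cases h : k = l <;> simp [Glast, h]

lemma Glast_mem_unitaryGroup (n : ℕ) {τ : ℂ} (hτ : ‖τ‖ = 1) :
    Glast n τ ∈ unitaryGroup (Fin (n + 1)) ℂ := by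
  rw [mem_unitaryGroup_iff, Glast_eq_diagonal, star_eq_conjTranspose, diagonal_conjTranspose,
    diagonal_mul_diagonal, ← diagonal_one]
  congr 1
  ext k
  by_cases hk : k.val = n <;> simp [hk, Complex.conj_mul', hτ]

noncomputable def Gprefix (n : ℕ) (α : ℕ → ℂ) (m : ℕ) : Matrix (Fin (n + 1)) (Fin (n + 1)) ℂ :=
  ((List.range m).map fun j => Gstep n j (α j)).prod

section Gprefix

variable {n : ℕ} {α : ℕ → ℂ}

lemma Gprefix_succ (m : ℕ) : Gprefix n α (m + 1) = Gprefix n α m * Gstep n m (α m) := by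
  simp [Gprefix, List.range_succ]

lemma Gprefix_apply_eq_one_apply {m : ℕ} {k : Fin (n + 1)} (hmk : m < k.val) (l : Fin (n + 1)) :
    Gprefix n α m k l = (1 : Matrix (Fin (n + 1)) (Fin (n + 1)) ℂ) k l := by
  induction m generalizing l with
  | zero => rfl
  | succ m ih =>
    rw [Gprefix_succ, mul_Gstep_apply (by omega), ih (by omega), ih (by omega), ih (by omega)]
    simp only [one_apply, Fin.ext_iff]
    split_ifs <;> first | omega | ring

lemma Gprefix_apply_of_lt {m : ℕ} (hm : m ≤ n) {k l : Fin (n + 1)} (hlk : l.val < k.val) :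
    Gprefix n α m k l = if k.val = l.val + 1 ∧ k.val ≤ m then (rho (α l) : ℂ) else 0 := by
  induction m generalizing l with
  | zero => rw [Gprefix_apply_eq_one_apply (by omega), one_apply_ne (by omega), if_neg (by omega)]
  | succ m ih =>
    rw [Gprefix_succ, mul_Gstep_apply (by omega)]
    by_cases hl : l.val = m ∨ l.val = m + 1
    · have hmk : m < k.val := by omega
      rw [Gprefix_apply_eq_one_apply hmk, Gprefix_apply_eq_one_apply hmk]
      simp only [one_apply, Fin.ext_iff]
      split_ifs <;> first | omega | simp_all
    · rw [if_neg (by omega), if_neg (by omega), ih (by omega) hlk]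
      exact if_congr (by omega) rfl rfl

end Gprefix

lemma Gmat_apply (n : ℕ) (α : ℕ → ℂ) (τ : ℂ) (k l : Fin (n + 1)) :
    Gmat n α τ k l = Gprefix n α n k l * if l.val = n then starRingEnd ℂ τ else 1 := by
  rw [Gmat, Glast_eq_diagonal, mul_diagonal]
  rfl

/-- `G(α_0,…,α_{n-1},τ_n)` is a unitary upper Hessenberg matrix with
positive subdiagonal elements `ρ_k = (1 - |α_k|²)^{1/2}`. -/
theorem stmt_1 (n : ℕ) (α : ℕ → ℂ)
    (hα : ∀ j, j < n → ‖α j‖ < 1)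
    (τ : ℂ) (hτ : ‖τ‖ = 1) :
    Gmat n α τ ∈ Matrix.unitaryGroup (Fin (n + 1)) ℂ ∧
    (∀ k, (hk : k < n) →
      Gmat n α τ ⟨k + 1, by omega⟩ ⟨k, by omega⟩ = (rho (α k) : ℂ) ∧ 0 < rho (α k)) ∧
    (∀ k l : Fin (n + 1), l.val + 1 < k.val → Gmat n α τ k l = 0) := by
  refine ⟨?_, fun k hk => ⟨?_, rho_pos (hα k hk)⟩, fun k l hlk => ?_⟩
  · refine mul_mem (list_prod_mem ?_) (Glast_mem_unitaryGroup n hτ)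
    simp only [List.mem_map, List.mem_range]
    rintro _ ⟨j, hj, rfl⟩
    exact Gstep_mem_unitaryGroup hj (hα j hj)
  · rw [Gmat_apply, if_neg (by simp; omega), mul_one, Gprefix_apply_of_lt le_rfl (by simp),
      if_pos (by simp; omega)]
  · rw [Gmat_apply, Gprefix_apply_of_lt le_rfl (by omega), if_neg (by omega), zero_mul]
end

section
/- Let n ≥ 1, let α_0, …, α_{n−1} lie in the open unit disk and τ_n on the unit circle, and let 0 ≤ j ≤ n−1. Partition G(α_0,…,α_{n−1},τ_n) into blocks so that G_11 is the leading principal submatrix of size (j+1)×(j+1) and G_22 is the trailing principal submatrix of size (n−j)×(n−j). Then G_22 has no eigenvalue of modulus 1; that is, det(G_22 − ζ·I) ≠ 0 for every complex ζ with |ζ| = 1. -/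
open Matrix
open scoped ComplexOrder

/-!
`G` is unitary, as a product of unitary factors. Suppose `G₂₂ v = ζ v` with `|ζ| = 1` and let `x`
be `v` extended by zeros. Then `‖G x‖ = ‖x‖ = ‖v‖ = ‖(G x)₂‖`, so the top block of `G x` vanishes
and `G x = ζ x`: `x` is an eigenvector of `G` with `x₀ = 0`. Now `G = G₀ · diag(1, G')`, where `G'`
is built in the same way from `α₁, …, α_{n-1}, τ`; since `ρ₀ ≠ 0`, the first two rows of `G₀` force
`x₁ = 0` and make the tail of `x` an eigenvector of `G'` vanishing at its first coordinate, so
`x = 0` by induction.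
-/

open Function

section Compression

variable {R ι κ : Type*} [CommRing R] [Fintype ι] [Fintype κ]

theorem Matrix.dotProduct_extend_zero {S : κ → ι} (hS : Injective S) (w : ι → R) (v : κ → R) :
    w ⬝ᵥ extend S v 0 = (w ∘ S) ⬝ᵥ v :=
  (Fintype.sum_of_injective S hS _ _
    (fun k hk => by simp [extend_apply' _ _ _ hk]) (fun i => by simp [hS.extend_apply])).symm

theorem Matrix.mulVec_extend_zero {m : Type*} {S : κ → ι} (hS : Injective S) (M : Matrix m ι R)
    (v : κ → R) : M *ᵥ extend S v 0 = M.submatrix id S *ᵥ v :=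
  funext fun k => dotProduct_extend_zero hS (M k) v

variable [StarRing R]

theorem Matrix.star_mulVec_dotProduct_mulVec [DecidableEq ι] {U : Matrix ι ι R}
    (hU : U ∈ unitaryGroup ι R) (x : ι → R) : star (U *ᵥ x) ⬝ᵥ (U *ᵥ x) = star x ⬝ᵥ x := by
  rw [star_mulVec, dotProduct_mulVec, vecMul_vecMul, ← star_eq_conjTranspose,
    mem_unitaryGroup_iff'.mp hU, vecMul_one]

variable [PartialOrder R] [StarOrderedRing R] [NoZeroDivisors R]

/-- Equality case of Cauchy–Schwarz: the hypotheses make `star (y - ζ • x) ⬝ᵥ (y - ζ • x)`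
vanish. -/
theorem Matrix.eq_smul_of_star_dotProduct_eq {x y : ι → R} {ζ : R} (hζ : ζ ∈ unitary R)
    (hy : star y ⬝ᵥ y = star x ⬝ᵥ x) (hyx : star y ⬝ᵥ x = star ζ * (star x ⬝ᵥ x)) :
    y = ζ • x := by
  have hxy : star x ⬝ᵥ y = ζ * (star x ⬝ᵥ x) := by
    rw [star_dotProduct, hyx, star_mul, star_star, ← star_dotProduct_star, star_star, mul_comm]
  rw [← sub_eq_zero, ← dotProduct_star_self_eq_zero]
  simp only [star_sub, star_smul, sub_dotProduct, dotProduct_sub, smul_dotProduct,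
    dotProduct_smul, smul_eq_mul, hy, hxy, hyx]
  linear_combination -(star x ⬝ᵥ x) * Unitary.star_mul_self_of_mem hζ

theorem Matrix.mulVec_extend_zero_eq_smul_of_submatrix_mulVec_eq_smul [DecidableEq ι]
    {U : Matrix ι ι R} (hU : U ∈ unitaryGroup ι R) {S : κ → ι} (hS : Injective S) {v : κ → R}
    {ζ : R} (hζ : ζ ∈ unitary R) (hv : U.submatrix S S *ᵥ v = ζ • v) :
    U *ᵥ extend S v 0 = ζ • extend S v 0 := by
  have hx : star (extend S v 0) ∘ S = star v := funext fun i => by simp [hS.extend_apply]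
  have hUx : star (U *ᵥ extend S v 0) ∘ S = star (ζ • v) := by
    rw [mulVec_extend_zero hS, ← hv]; rfl
  refine eq_smul_of_star_dotProduct_eq hζ (star_mulVec_dotProduct_mulVec hU _) ?_
  rw [dotProduct_extend_zero hS, dotProduct_extend_zero hS, hx, hUx, star_smul,
    smul_dotProduct, smul_eq_mul]

end Compression

section DiagCons

variable {R : Type*} {m : ℕ}

/-- The block matrix `diag(1, M)`. -/
def diagCons [Zero R] [One R] (M : Matrix (Fin m) (Fin m) R) :
    Matrix (Fin (m + 1)) (Fin (m + 1)) R :=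
  Matrix.of (Fin.cons (Fin.cons 1 0) fun k => Fin.cons 0 (M k))

section Semiring

variable [Semiring R]

theorem diagCons_mulVec (M : Matrix (Fin m) (Fin m) R) (a : R) (x : Fin m → R) :
    diagCons M *ᵥ Fin.cons a x = Fin.cons a (M *ᵥ x) := by
  ext k
  refine Fin.cases ?_ (fun k => ?_) k <;> simp [diagCons, mulVec, dotProduct, Fin.sum_univ_succ]

theorem diagCons_one : diagCons (1 : Matrix (Fin m) (Fin m) R) = 1 := by
  ext k l
  refine Fin.cases ?_ (fun k => ?_) k <;> refine Fin.cases ?_ (fun l => ?_) l <;>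
    simp [diagCons, one_apply, Fin.succ_ne_zero, (Fin.succ_ne_zero _).symm]

theorem diagCons_mul (M N : Matrix (Fin m) (Fin m) R) :
    diagCons (M * N) = diagCons M * diagCons N := by
  ext k l
  refine Fin.cases ?_ (fun k => ?_) k <;> refine Fin.cases ?_ (fun l => ?_) l <;>
    simp [diagCons, mul_apply, Fin.sum_univ_succ]

variable (R m) in
@[simps]
def diagConsHom : Matrix (Fin m) (Fin m) R →* Matrix (Fin (m + 1)) (Fin (m + 1)) R where
  toFun := diagCons
  map_one' := diagCons_one
  map_mul' := diagCons_mul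

theorem conjTranspose_diagCons [StarRing R] (M : Matrix (Fin m) (Fin m) R) :
    (diagCons M)ᴴ = diagCons Mᴴ := by
  ext k l
  refine Fin.cases ?_ (fun k => ?_) k <;> refine Fin.cases ?_ (fun l => ?_) l <;>
    simp [diagCons]

end Semiring

theorem diagCons_mem_unitaryGroup [CommRing R] [StarRing R] {M : Matrix (Fin m) (Fin m) R}
    (hM : M ∈ unitaryGroup (Fin m) R) : diagCons M ∈ unitaryGroup (Fin (m + 1)) R := by
  rw [mem_unitaryGroup_iff', star_eq_conjTranspose, conjTranspose_diagCons, ← diagCons_mul,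
    ← star_eq_conjTranspose, mem_unitaryGroup_iff'.mp hM, diagCons_one]

end DiagCons

theorem rho_pos_s2 {α : ℂ} (hα : ‖α‖ < 1) : 0 < rho α :=
  Real.sqrt_pos.mpr (by nlinarith [norm_nonneg α])

theorem ofReal_rho_mul_self {α : ℂ} (hα : ‖α‖ ≤ 1) :
    (rho α : ℂ) * rho α = 1 - starRingEnd ℂ α * α := by
  have h : rho α * rho α = 1 - ‖α‖ ^ 2 := Real.mul_self_sqrt (by nlinarith [norm_nonneg α])
  rw [Complex.conj_mul', ← Complex.ofReal_mul, h]
  push_cast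
  ring

theorem Gstep_succ_succ (n j : ℕ) (α : ℂ) :
    Gstep (n + 1) (j + 1) α = diagCons (Gstep n j α) := by
  ext k l
  refine Fin.cases ?_ (fun k => ?_) k <;> refine Fin.cases ?_ (fun l => ?_) l <;>
    simp [Gstep, diagCons, Fin.succ_inj, (Fin.succ_ne_zero _).symm]

theorem Glast_succ (n : ℕ) (τ : ℂ) : Glast (n + 1) τ = diagCons (Glast n τ) := by
  ext k l
  refine Fin.cases ?_ (fun k => ?_) k <;> refine Fin.cases ?_ (fun l => ?_) l <;>
    simp [Glast, diagCons, Fin.succ_inj, (Fin.succ_ne_zero _).symm]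

theorem Gmat_succ (n : ℕ) (α : ℕ → ℂ) (τ : ℂ) :
    Gmat (n + 1) α τ = Gstep (n + 1) 0 (α 0) * diagCons (Gmat n (fun i => α (i + 1)) τ) := by
  have hsteps : ((List.range n).map fun j => Gstep (n + 1) (j + 1) (α (j + 1))).prod =
      diagCons ((List.range n).map fun j => Gstep n j (α (j + 1))).prod := by
    rw [← diagConsHom_apply, map_list_prod, List.map_map]
    simp only [Gstep_succ_succ]
    rfl
  rw [Gmat, Gmat, List.range_succ_eq_map, List.map_cons, List.prod_cons, List.map_map, mul_assoc,
    Glast_succ, diagCons_mul]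
  exact congrArg _ (congrArg (· * _) hsteps)

theorem Gstep_zero_mulVec (n : ℕ) (α a b : ℂ) (x : Fin n → ℂ) :
    Gstep (n + 1) 0 α *ᵥ Fin.cons a (Fin.cons b x) =
      Fin.cons (starRingEnd ℂ α * a + rho α * b) (Fin.cons (rho α * a - α * b) x) := by
  ext k
  refine Fin.cases ?_ (Fin.cases ?_ fun k => ?_) k <;>
    simp [Gstep, mulVec, dotProduct, Fin.sum_univ_succ, (Fin.succ_ne_zero _).symm,
      (Fin.succ_succ_ne_one _).symm, sub_eq_add_neg]

theorem Gstep_zero_mem_unitaryGroup (n : ℕ) {α : ℂ} (hα : ‖α‖ ≤ 1) :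
    Gstep (n + 1) 0 α ∈ unitaryGroup (Fin (n + 2)) ℂ := by
  rw [mem_unitaryGroup_iff']
  ext k l
  refine Fin.cases ?_ (Fin.cases ?_ fun k => ?_) k <;>
    refine Fin.cases ?_ (Fin.cases ?_ fun l => ?_) l <;>
    simp [Gstep, mul_apply, Fin.sum_univ_succ, one_apply, Fin.succ_ne_zero,
      (Fin.succ_ne_zero _).symm, Fin.succ_succ_ne_one, (Fin.succ_succ_ne_one _).symm]
  all_goals first
    | linear_combination ofReal_rho_mul_self hα
    | ring1
    | exact if_congr eq_comm rfl rfl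

theorem Glast_zero_mem_unitaryGroup {τ : ℂ} (hτ : ‖τ‖ = 1) :
    Glast 0 τ ∈ unitaryGroup (Fin 1) ℂ := by
  rw [mem_unitaryGroup_iff']
  ext k l
  fin_cases k; fin_cases l
  simp [Glast, mul_apply, Complex.mul_conj', hτ]

theorem Gmat_mem_unitaryGroup {n : ℕ} {α : ℕ → ℂ} (hα : ∀ i < n, ‖α i‖ ≤ 1) {τ : ℂ}
    (hτ : ‖τ‖ = 1) : Gmat n α τ ∈ unitaryGroup (Fin (n + 1)) ℂ := by
  induction n generalizing α with
  | zero => simpa [Gmat] using Glast_zero_mem_unitaryGroup hτ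
  | succ n ih =>
    rw [Gmat_succ]
    exact mul_mem (Gstep_zero_mem_unitaryGroup n (hα 0 n.succ_pos))
      (diagCons_mem_unitaryGroup (ih fun i hi => hα (i + 1) (by omega)))

theorem eq_zero_of_Gmat_mulVec_eq_smul {n : ℕ} {α : ℕ → ℂ} (hα : ∀ i < n, ‖α i‖ < 1)
    {τ ζ : ℂ} (hζ : ζ ≠ 0) {x : Fin (n + 1) → ℂ} (hx : Gmat n α τ *ᵥ x = ζ • x)
    (hx0 : x 0 = 0) : x = 0 := by
  induction n generalizing α with
  | zero => exact funext fun k => by fin_cases k; exact hx0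
  | succ n ih =>
    obtain ⟨y, rfl⟩ : ∃ y, x = Fin.cons 0 y := ⟨Fin.tail x, by rw [← hx0, Fin.cons_self_tail]⟩
    have hρ : (rho (α 0) : ℂ) ≠ 0 := Complex.ofReal_ne_zero.mpr (rho_pos_s2 (hα 0 n.succ_pos)).ne'
    rw [Gmat_succ, ← mulVec_mulVec, diagCons_mulVec] at hx
    generalize hw : Gmat n (fun i => α (i + 1)) τ *ᵥ y = w at hx
    rw [← Fin.cons_self_tail w, Gstep_zero_mulVec] at hx
    have hw0 : w 0 = 0 := by simpa [hρ] using congrFun hx 0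
    have hy0 : y 0 = 0 := by simpa [hw0, hζ] using congrFun hx 1
    have hy : Gmat n (fun i => α (i + 1)) τ *ᵥ y = ζ • y := by
      rw [hw]
      funext k
      refine Fin.cases ?_ (fun k => ?_) k
      · simp [hw0, hy0]
      · simpa [Fin.tail] using congrFun hx k.succ.succ
    rw [ih (fun i hi => hα (i + 1) (by omega)) hy hy0]
    exact Matrix.cons_zero_zero

/-- For `0 ≤ j ≤ n-1`, the trailing principal submatrix `G_22` of size
`(n-j)×(n-j)` of `G(α_0,…,α_{n-1},τ_n)` has no eigenvalue on the unit circle: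
`det(G_22 - ζ·I) ≠ 0` for every `ζ` with `|ζ| = 1`. -/
theorem stmt_2 (n : ℕ) (α : ℕ → ℂ)
    (hα : ∀ i, i < n → ‖α i‖ < 1)
    (τ : ℂ) (hτ : ‖τ‖ = 1)
    (j : ℕ)
    (ζ : ℂ) (hζ : ‖ζ‖ = 1) :
    ((Gmat n α τ).submatrix
        (fun i : Fin (n - j) => (⟨j + 1 + i.val, by have := i.isLt; omega⟩ : Fin (n + 1)))
        (fun i : Fin (n - j) => (⟨j + 1 + i.val, by have := i.isLt; omega⟩ : Fin (n + 1)))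
      - ζ • (1 : Matrix (Fin (n - j)) (Fin (n - j)) ℂ)).det ≠ 0 := by
  set S : Fin (n - j) → Fin (n + 1) := fun i => ⟨j + 1 + i.val, by have := i.isLt; omega⟩
  have hS : Injective S := fun a b h => Fin.ext (by simpa [S] using congrArg Fin.val h)
  have hζu : ζ ∈ unitary ℂ := by
    rw [Unitary.mem_iff_star_mul_self, Complex.star_def, Complex.conj_mul', hζ]
    simp
  intro hdet
  obtain ⟨v, hv0, hv⟩ := exists_mulVec_eq_zero_iff.mpr hdet
  rw [sub_mulVec, smul_mulVec, one_mulVec, sub_eq_zero] at hv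
  have hx := mulVec_extend_zero_eq_smul_of_submatrix_mulVec_eq_smul
    (Gmat_mem_unitaryGroup (fun i hi => (hα i hi).le) hτ) hS hζu hv
  have hx0 : extend S v 0 0 = 0 :=
    extend_apply' _ _ _ fun ⟨i, hi⟩ => by simp [S, Fin.ext_iff] at hi
  have hx_zero := eq_zero_of_Gmat_mulVec_eq_smul hα (norm_ne_zero_iff.mp (by simp [hζ])) hx hx0
  exact hv0 (funext fun i => by simpa [hS.extend_apply] using congrFun hx_zero (S i))
end

section
/- Let I be an open real interval, let M : I → M_N(ℂ) be a differentiable matrix-valued function with M(t) Hermitian for every t ∈ I, let q : I → ℂ^N and θ : I → ℝ be differentiable with q(t) ≠ 0, θ(t) ∈ (0, 2π), and M(t) q(t) = cot(θ(t)/2) · q(t) for all t ∈ I. Then for every t ∈ I, ⟨q(t), M′(t) q(t)⟩ = ‖q(t)‖² · θ′(t) / (cos θ(t) − 1). In particular, θ is strictly increasing at t (the corresponding eigenvalue e^{iθ(t)} moves counterclockwise) if and only if ⟨q(t), M′(t) q(t)⟩ < 0. -/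
/-
Differentiating `M q = μ q` and pairing with `q`, the terms containing `q'` cancel because `M` is
Hermitian, which leaves the Hellmann–Feynman formula `⟨q, M' q⟩ = μ' ‖q‖²`. For `μ = cot (θ / 2)`
one has `μ' = θ' / (cos θ - 1)`, and `cos θ - 1 < 0` on `(0, 2π)` gives the sign statement.
-/

open Matrix Filter Topology ComplexOrder

section
variable {𝕜 n : Type*} [RCLike 𝕜] [Fintype n]

theorem hasDerivAt_star_dotProduct_mulVec {A : ℝ → Matrix n n 𝕜} {A' : Matrix n n 𝕜}
    {u : ℝ → n → 𝕜} {u' : n → 𝕜} {t : ℝ}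
    (hA : ∀ i j, HasDerivAt (fun s => A s i j) (A' i j) t)
    (hu : ∀ i, HasDerivAt (fun s => u s i) (u' i) t) :
    HasDerivAt (fun s => star (u s) ⬝ᵥ A s *ᵥ u s)
      (star u' ⬝ᵥ A t *ᵥ u t + star (u t) ⬝ᵥ A' *ᵥ u t + star (u t) ⬝ᵥ A t *ᵥ u') t := by
  refine (HasDerivAt.fun_sum fun i _ =>
    (hu i).star.fun_mul (HasDerivAt.fun_sum fun j _ => (hA i j).fun_mul (hu j))).congr_deriv ?_
  simp only [dotProduct, mulVec, Pi.star_apply, mul_add, Finset.mul_sum, Finset.sum_add_distrib,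
    add_assoc]

theorem Matrix.IsHermitian.star_dotProduct_mulVec_eq_zero {A : Matrix n n 𝕜} (hA : A.IsHermitian)
    {u : n → 𝕜} (hu : A *ᵥ u = 0) (v : n → 𝕜) : star u ⬝ᵥ A *ᵥ v = 0 := by
  rw [dotProduct_mulVec, ← hA.eq, ← star_mulVec, hu, star_zero, zero_dotProduct]

theorem hellmann_feynman [DecidableEq n] {M : ℝ → Matrix n n 𝕜} {M' : Matrix n n 𝕜}
    {q : ℝ → n → 𝕜} {μ : ℝ → ℝ} {μ' t : ℝ}
    (hM : ∀ i j, HasDerivAt (fun s => M s i j) (M' i j) t)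
    (hq : ∀ i, DifferentiableAt ℝ (fun s => q s i) t) (hμ : HasDerivAt μ μ' t)
    (hherm : (M t).IsHermitian) (heig : ∀ᶠ s in 𝓝 t, M s *ᵥ q s = μ s • q s) :
    star (q t) ⬝ᵥ M' *ᵥ q t = μ' • (star (q t) ⬝ᵥ q t) := by
  -- `s ↦ ⟨q s, (M s - μ s) q s⟩` vanishes near `t`, so its derivative at `t` is zero.
  set A : ℝ → Matrix n n 𝕜 := fun s => M s - μ s • 1
  have hA : ∀ i j, HasDerivAt (fun s => A s i j) ((M' - μ' • 1) i j) t := fun i j =>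
    (hM i j).sub (hμ.smul_const _)
  have hAq : ∀ᶠ s in 𝓝 t, A s *ᵥ q s = 0 := heig.mono fun s hs => by
    simp [A, sub_mulVec, smul_mulVec, hs]
  have hAherm : (A t).IsHermitian := hherm.sub (isHermitian_one.smul (.all _))
  have hzero := (hasDerivAt_star_dotProduct_mulVec hA fun i => (hq i).hasDerivAt).unique
    ((hasDerivAt_const t 0).congr_of_eventuallyEq (hAq.mono fun s hs => by simp [hs]))
  rwa [hAq.self_of_nhds, hAherm.star_dotProduct_mulVec_eq_zero hAq.self_of_nhds, dotProduct_zero,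
    zero_add, add_zero, sub_mulVec, smul_mulVec, one_mulVec, dotProduct_sub, dotProduct_smul,
    sub_eq_zero] at hzero
end

theorem Real.cos_sub_one_eq_neg_two_mul_sin_sq_half (x : ℝ) :
    Real.cos x - 1 = -2 * Real.sin (x / 2) ^ 2 := by
  conv_lhs => rw [← mul_div_cancel₀ x two_ne_zero, Real.cos_two_mul, Real.cos_sq']
  ring

theorem Real.hasDerivAt_cot_half {x : ℝ} (hx : Real.sin (x / 2) ≠ 0) :
    HasDerivAt (fun y => Real.cot (y / 2)) (1 / (Real.cos x - 1)) x := by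
  have hhalf := (hasDerivAt_id' x).div_const 2
  have hquot :=
    ((Real.hasDerivAt_cos _).comp x hhalf).div ((Real.hasDerivAt_sin _).comp x hhalf) hx
  simp only [Real.cot_eq_cos_div_sin]
  refine hquot.congr_deriv ?_
  dsimp only [Function.comp_apply]
  rw [Real.cos_sub_one_eq_neg_two_mul_sin_sq_half]
  field_simp
  linear_combination -Real.sin_sq_add_cos_sq (x / 2)

/-- If `M(t)` is a differentiable Hermitian matrix function on an open
interval, `q(t) ≠ 0` a differentiable eigenvector function and `θ(t) ∈ (0, 2π)` a
differentiable function with `M(t) q(t) = cot(θ(t)/2) q(t)`, then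
`⟨q, M' q⟩ = ‖q‖² θ' / (cos θ − 1)`; in particular `θ' > 0` iff `⟨q, M' q⟩ < 0`. -/
theorem stmt_11 {N : ℕ} (a b : ℝ)
    (M M' : ℝ → Matrix (Fin N) (Fin N) ℂ)
    (q : ℝ → Fin N → ℂ) (θ θ' : ℝ → ℝ)
    (hM : ∀ t ∈ Set.Ioo a b, ∀ i j, HasDerivAt (fun s => M s i j) (M' t i j) t)
    (hMherm : ∀ t ∈ Set.Ioo a b, (M t).IsHermitian)
    (hq : ∀ t ∈ Set.Ioo a b, ∀ i, DifferentiableAt ℝ (fun s => q s i) t)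
    (hθ : ∀ t ∈ Set.Ioo a b, HasDerivAt θ (θ' t) t)
    (hq0 : ∀ t ∈ Set.Ioo a b, q t ≠ 0)
    (hθrange : ∀ t ∈ Set.Ioo a b, θ t ∈ Set.Ioo (0 : ℝ) (2 * Real.pi))
    (heig : ∀ t ∈ Set.Ioo a b, (M t).mulVec (q t) = (Real.cot (θ t / 2) : ℂ) • q t) :
    ∀ t ∈ Set.Ioo a b,
      star (q t) ⬝ᵥ (M' t).mulVec (q t)
        = (star (q t) ⬝ᵥ q t) * ((θ' t : ℂ) / ((Real.cos (θ t) : ℂ) - 1)) ∧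
      (0 < θ' t ↔ (star (q t) ⬝ᵥ (M' t).mulVec (q t)).re < 0) := by
  intro t ht
  have hsin : 0 < Real.sin (θ t / 2) := Real.sin_pos_of_pos_of_lt_pi
    (by linarith [(hθrange t ht).1]) (by linarith [(hθrange t ht).2])
  have hcos : Real.cos (θ t) - 1 < 0 := by
    rw [Real.cos_sub_one_eq_neg_two_mul_sin_sq_half]
    linarith [pow_pos hsin 2]
  have hcot : HasDerivAt (fun s => Real.cot (θ s / 2)) (θ' t / (Real.cos (θ t) - 1)) t :=
    ((Real.hasDerivAt_cot_half hsin.ne').comp t (hθ t ht)).congr_deriv (one_div_mul_eq_div _ _)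
  have hHF := hellmann_feynman (μ := fun s => Real.cot (θ s / 2)) (hM t ht) (hq t ht) hcot
    (hMherm t ht) (eventually_of_mem (Ioo_mem_nhds ht.1 ht.2) fun s hs =>
      (heig s hs).trans (Complex.coe_smul _ _))
  refine ⟨by rw [hHF, Complex.real_smul]; push_cast; ring, ?_⟩
  obtain ⟨hre, -⟩ := Complex.lt_def.1 (dotProduct_star_self_pos_iff.2 (hq0 t ht))
  rw [hHF, Complex.smul_re, smul_eq_mul, div_mul_eq_mul_div, div_lt_iff_of_neg hcos, zero_mul,
    mul_pos_iff_of_pos_right hre]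
end

section
/- For all real numbers a and b, the polynomials r̃_j satisfy the three-term recurrence relation r̃_{j+1}(z) = ((a + j − ib) + (a + j + ib) z) · r̃_j(z) − j (2a + j − 1) z · r̃_{j−1}(z) for every integer j ≥ 0, with the conventions r̃_{−1}(z) := 0 and r̃_0(z) := 1, as an identity of polynomials in ℂ[z]. -/
/-!
With `α = a + bi` and `γ = 2a`, substituting `z = 1 + x` gives `r̃_j(z) = P_j(x)` where
`P_j(x) = Σ_k C(j,k) (α)_k (γ+k)_{j-k} x^k`, and the recurrence becomes one with no signs to
track: `P_{j+1} = (γ + 2j + (α + j) x) P_j - j (γ + j - 1) (1 + x) P_{j-1}`, which makes sense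
over any commutative ring. Comparing coefficients of `x^k`, all five terms share the factor
`(α)_k (γ+k+1)_{j-k-1}` when `k < j`, and the identity reduces to the absorption identity
`C(j,k) (j+1) = C(j+1,k) (j+1-k)`; the cases `k ≥ j` are direct evaluations.
-/

open Polynomial

/-- The Pochhammer symbol (rising factorial) `(x)_m = x(x+1)⋯(x+m-1)` in `ℂ`. -/
noncomputable def pochC (x : ℂ) (m : ℕ) : ℂ := (ascPochhammer ℂ m).eval x

/-- `r̃_j(z) := Σ_{k=0}^{j} (−1)^k · C(j,k) · (a+bi)_k · (2a+k)_{j−k} · (1−z)^k`,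
which equals `(2a)_j · ₂F₁(−j, a+bi; 2a; 1−z)`. -/
noncomputable def rpoly (a b : ℝ) (j : ℕ) : Polynomial ℂ :=
  ∑ k ∈ Finset.range (j + 1),
    Polynomial.C ((-1 : ℂ) ^ k * (j.choose k : ℂ) * pochC ((a : ℂ) + (b : ℂ) * Complex.I) k *
        pochC (2 * (a : ℂ) + (k : ℂ)) (j - k)) * (1 - Polynomial.X) ^ k

theorem ascPochhammer_succ_eval_left {S : Type*} [CommSemiring S] (x : S) (n : ℕ) :
    (ascPochhammer S (n + 1)).eval x = x * (ascPochhammer S n).eval (x + 1) := by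
  simp [ascPochhammer_succ_left, eval_comp]

section Semiring

variable {R : Type*} [Semiring R] (α γ : R)

noncomputable def hyp2F1Coeff (j k : ℕ) : R :=
  j.choose k * (ascPochhammer R k).eval α * (ascPochhammer R (j - k)).eval (γ + k)

-- `(γ)_j ₂F₁(-j, α; γ; -x)`
noncomputable def hyp2F1Poly (j : ℕ) : R[X] :=
  ∑ k ∈ Finset.range (j + 1), C (hyp2F1Coeff α γ j k) * X ^ k

theorem hyp2F1Coeff_of_lt {j k : ℕ} (h : j < k) : hyp2F1Coeff α γ j k = 0 := by
  simp [hyp2F1Coeff, Nat.choose_eq_zero_of_lt h]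

theorem hyp2F1Coeff_zero_right (j : ℕ) :
    hyp2F1Coeff α γ j 0 = (ascPochhammer R j).eval γ := by
  simp [hyp2F1Coeff]

theorem coeff_hyp2F1Poly (j k : ℕ) : (hyp2F1Poly α γ j).coeff k = hyp2F1Coeff α γ j k := by
  simp only [hyp2F1Poly, finsetSum_coeff, coeff_C_mul_X_pow, Finset.sum_ite_eq, Finset.mem_range]
  split_ifs with h
  · rfl
  · exact (hyp2F1Coeff_of_lt α γ (by omega)).symm

theorem hyp2F1Poly_zero : hyp2F1Poly α γ 0 = 1 := by
  simp [hyp2F1Poly, hyp2F1Coeff]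

theorem hyp2F1Poly_one : hyp2F1Poly α γ 1 = C γ + C α * X := by
  simp [hyp2F1Poly, hyp2F1Coeff, Finset.sum_range_succ]

end Semiring

section CommRing

variable {R : Type*} [CommRing R] (α γ : R)

theorem hyp2F1Coeff_succ_succ_zero (j : ℕ) :
    hyp2F1Coeff α γ (j + 2) 0 =
      (γ + 2 * (j + 1)) * hyp2F1Coeff α γ (j + 1) 0 -
        (j + 1) * (γ + j) * hyp2F1Coeff α γ j 0 := by
  simp only [hyp2F1Coeff_zero_right, ascPochhammer_succ_eval]
  push_cast
  ring

theorem hyp2F1Coeff_succ_succ_succ_of_lt {j k : ℕ} (h : k < j) :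
    hyp2F1Coeff α γ (j + 2) (k + 1) =
      (γ + 2 * (j + 1)) * hyp2F1Coeff α γ (j + 1) (k + 1) +
        (α + (j + 1)) * hyp2F1Coeff α γ (j + 1) k -
        (j + 1) * (γ + j) * (hyp2F1Coeff α γ j (k + 1) + hyp2F1Coeff α γ j k) := by
  obtain ⟨m, rfl⟩ : ∃ m, j = k + 1 + m := ⟨j - k - 1, by omega⟩
  have hpascal₁ :
      (k + 1 + m + 1).choose (k + 1) = (k + 1 + m).choose k + (k + 1 + m).choose (k + 1) :=
    Nat.choose_succ_succ' _ _
  have hpascal₂ : (k + 1 + m + 2).choose (k + 1) =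
      (k + 1 + m + 1).choose k + (k + 1 + m + 1).choose (k + 1) :=
    Nat.choose_succ_succ' _ _
  have habsorb := congrArg (Nat.cast : ℕ → R) (Nat.choose_mul_succ_eq (k + 1 + m) k)
  rw [show k + 1 + m + 1 - k = m + 2 by omega] at habsorb
  have hshift : γ + (k : R) + 1 = γ + (k + 1 : ℕ) := by push_cast; ring
  simp only [hyp2F1Coeff, hpascal₁, hpascal₂, show k + 1 + m + 2 - (k + 1) = m + 2 by omega,
    show k + 1 + m + 1 - (k + 1) = m + 1 by omega, show k + 1 + m + 1 - k = m + 2 by omega,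
    show k + 1 + m - (k + 1) = m by omega, show k + 1 + m - k = m + 1 by omega,
    ascPochhammer_succ_eval, ascPochhammer_succ_eval_left (γ + k), hshift]
  generalize (ascPochhammer R k).eval α = A
  generalize (ascPochhammer R m).eval (γ + (k + 1 : ℕ)) = G
  push_cast at habsorb ⊢
  -- after cancelling the common factor `A G (γ + j)`, the sides differ by `(γ - α) • habsorb`
  linear_combination A * G * (γ + k + m + 1) * (γ - α) * habsorb

theorem hyp2F1Coeff_succ_succ_succ (j k : ℕ) :
    hyp2F1Coeff α γ (j + 2) (k + 1) =
      (γ + 2 * (j + 1)) * hyp2F1Coeff α γ (j + 1) (k + 1) +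
        (α + (j + 1)) * hyp2F1Coeff α γ (j + 1) k -
        (j + 1) * (γ + j) * (hyp2F1Coeff α γ j (k + 1) + hyp2F1Coeff α γ j k) := by
  obtain h | rfl | rfl | h : k < j ∨ k = j ∨ k = j + 1 ∨ j + 1 < k := by omega
  · exact hyp2F1Coeff_succ_succ_succ_of_lt α γ h
  · rw [hyp2F1Coeff_of_lt α γ k.lt_succ_self]
    simp only [hyp2F1Coeff, Nat.choose_succ_self_right, Nat.choose_self, Nat.cast_add,
      Nat.cast_one, ascPochhammer_succ_eval, Nat.reduceSubDiff, add_tsub_cancel_left, tsub_self,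
      ascPochhammer_one, ascPochhammer_zero, eval_X, eval_one, one_mul, mul_one, zero_add]
    ring
  · rw [hyp2F1Coeff_of_lt α γ (by omega : j + 1 < j + 1 + 1),
      hyp2F1Coeff_of_lt α γ (by omega : j < j + 1 + 1), hyp2F1Coeff_of_lt α γ j.lt_succ_self]
    simp only [hyp2F1Coeff, Nat.choose_self, Nat.cast_one, Nat.cast_add, ascPochhammer_succ_eval,
      tsub_self, ascPochhammer_zero, eval_one, one_mul, mul_one, mul_zero, zero_add, add_zero,
      sub_zero]
    ring
  · rw [hyp2F1Coeff_of_lt α γ (by omega : j + 2 < k + 1),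
      hyp2F1Coeff_of_lt α γ (by omega : j + 1 < k + 1),
      hyp2F1Coeff_of_lt α γ (by omega : j + 1 < k),
      hyp2F1Coeff_of_lt α γ (by omega : j < k + 1), hyp2F1Coeff_of_lt α γ (by omega : j < k)]
    ring

theorem hyp2F1Poly_succ_succ (j : ℕ) :
    hyp2F1Poly α γ (j + 2) =
      (C (γ + 2 * (j + 1)) + C (α + (j + 1)) * X) * hyp2F1Poly α γ (j + 1) -
        C ((j + 1) * (γ + j)) * (1 + X) * hyp2F1Poly α γ j := by
  ext (_ | k)
  · simp [coeff_hyp2F1Poly, hyp2F1Coeff_succ_succ_zero, add_mul, mul_add]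
  · simp [coeff_hyp2F1Poly, hyp2F1Coeff_succ_succ_succ, add_mul, mul_add, mul_assoc, coeff_X_mul]

end CommRing

theorem rpoly_eq_hyp2F1Poly_comp (a b : ℝ) (j : ℕ) :
    rpoly a b j = (hyp2F1Poly ((a : ℂ) + (b : ℂ) * Complex.I) (2 * (a : ℂ)) j).comp (X - 1) := by
  rw [rpoly, hyp2F1Poly, sum_comp]
  refine Finset.sum_congr rfl fun k _ => ?_
  rw [mul_comp, C_comp, X_pow_comp, hyp2F1Coeff, pochC, pochC,
    show (X - 1 : ℂ[X]) = -1 * (1 - X) by ring, mul_pow]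
  simp only [map_mul, map_pow, map_neg, map_one]
  ring

/-- The polynomials `r̃_j` satisfy the three-term recurrence
`r̃_{j+1}(z) = ((a+j−ib)+(a+j+ib)z)·r̃_j(z) − j(2a+j−1)·z·r̃_{j−1}(z)`
for every `j ≥ 0`, with conventions `r̃_{−1} = 0`, `r̃_0 = 1`. -/
theorem stmt_13 (a b : ℝ) (j : ℕ) :
    rpoly a b (j + 1) =
      (Polynomial.C ((a : ℂ) + (j : ℂ) - (b : ℂ) * Complex.I) +
          Polynomial.C ((a : ℂ) + (j : ℂ) + (b : ℂ) * Complex.I) * Polynomial.X) *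
        rpoly a b j -
      Polynomial.C ((j : ℂ) * (2 * (a : ℂ) + (j : ℂ) - 1)) * Polynomial.X *
        (if j = 0 then 0 else rpoly a b (j - 1)) := by
  simp only [rpoly_eq_hyp2F1Poly_comp]
  rcases j with _ | j
  · rw [if_pos rfl, zero_add, hyp2F1Poly_one, hyp2F1Poly_zero]
    simp only [add_comp, mul_comp, C_comp, X_comp, one_comp, map_add, map_sub, map_mul, map_ofNat,
      Nat.cast_zero, map_zero, ofNat_comp]
    ring
  · rw [if_neg j.succ_ne_zero, Nat.add_sub_cancel, hyp2F1Poly_succ_succ]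
    simp only [sub_comp, mul_comp, add_comp, C_comp, X_comp, one_comp]
    simp only [map_add, map_sub, map_mul, map_natCast, map_ofNat, map_one, Nat.cast_succ]
    ring
end

section
/- Let a > 0 and b be real numbers and n ≥ 0 an integer. Then r̃_{n+1}(1) = (2a)_{n+1} ≠ 0, and r̃_{n+1} has exactly n+1 zeros, all of which are simple and lie on the unit circle {z ∈ ℂ : |z| = 1}. -/
/-!
With `α = a + b i`, the polynomial `r̃_j` equals `q_j(z) = Σ_k C(j,k) (α)_k (ᾱ)_{j-k} z^k`:
both satisfy `q_{j+1} = (ᾱ + j + α z) q_j + (z² - z) q_j'`. The coefficients of `q_j` are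
conjugate-symmetric, so `e^{-ijθ/2} q_j(e^{iθ})` is real. If `q_n` vanishes at `e^{iθ_m}` with
`0 < θ_1 < ⋯ < θ_n < 2π`, then `e^{-inθ/2} q_n(e^{iθ})` is a constant multiple of
`∏_m sin((θ - θ_m)/2)`, and at `θ = θ_i` the recurrence reduces `q_{n+1}` to `(z² - z) q_n'`,
again a product of sines with the same constant. Comparing with the value `(2a)_n > 0` at
`θ = 0`, the real function attached to `q_{n+1}` alternates in sign along
`0, θ_1, …, θ_n, 2π`, so it has `n + 1` zeros in `(0, 2π)`, which exhaust the roots of `q_{n+1}`.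
-/

open Polynomial

open Complex ComplexConjugate Finset

lemma pochC_zero (x : ℂ) : pochC x 0 = 1 := by simp [pochC]

lemma pochC_succ (x : ℂ) (m : ℕ) : pochC x (m + 1) = pochC x m * (x + m) :=
  ascPochhammer_succ_eval m x

lemma pochC_succ_left (x : ℂ) (m : ℕ) : pochC x (m + 1) = x * pochC (x + 1) m := by
  simp [pochC, ascPochhammer_succ_left, eval_comp]

lemma pochC_ofReal (x : ℝ) (m : ℕ) : pochC x m = ((ascPochhammer ℝ m).eval x : ℝ) := by
  induction m with
  | zero => simp [pochC]
  | succ m ih => rw [pochC_succ, ih, ascPochhammer_succ_eval]; push_cast; rfl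

lemma conj_pochC (x : ℂ) (m : ℕ) : conj (pochC x m) = pochC (conj x) m := by
  induction m with
  | zero => simp [pochC_zero]
  | succ m ih => simp [pochC_succ, ih]

section Recurrence

variable {R : Type*} [CommRing R]

lemma coeff_sum_range_C_mul_X_pow {j : ℕ} {f : ℕ → R} (hf : ∀ k, j < k → f k = 0) (k : ℕ) :
    (∑ i ∈ range (j + 1), C (f i) * X ^ i).coeff k = f k := by
  simp only [finsetSum_coeff, coeff_C_mul_X_pow, sum_ite_eq, mem_range]
  split_ifs with h
  · rfl
  · exact (hf k (by omega)).symm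

lemma coeff_zero_linear_mul_add_derivative (A B ε : R) (p : R[X]) :
    ((C A + C B * X) * p + C ε * (X ^ 2 - X) * derivative p).coeff 0 = A * p.coeff 0 := by
  simp [mul_assoc, sub_mul, pow_two]

lemma coeff_succ_linear_mul_add_derivative (A B ε : R) (p : R[X]) (k : ℕ) :
    ((C A + C B * X) * p + C ε * (X ^ 2 - X) * derivative p).coeff (k + 1)
      = (A - ε * (k + 1)) * p.coeff (k + 1) + (B + ε * k) * p.coeff k := by
  rw [show (C A + C B * X) * p + C ε * (X ^ 2 - X) * derivative p
      = C A * p + C B * (p * X) + C ε * (derivative p * X ^ 2) - C ε * (derivative p * X ^ 1) by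
    ring]
  simp only [coeff_add, coeff_sub, coeff_C_mul, coeff_mul_X, coeff_mul_X_pow', coeff_derivative]
  rcases k with _ | k
  · simp; ring
  · simp only [if_pos (by omega : 2 ≤ k + 1 + 1), if_pos (by omega : 1 ≤ k + 1 + 1),
      show k + 1 + 1 - 2 = k by omega, show k + 1 + 1 - 1 = k + 1 by omega]
    push_cast; ring

end Recurrence

section Hypergeometric

variable (α β : ℂ)

noncomputable def symmCoeff (j k : ℕ) : ℂ := j.choose k * pochC α k * pochC β (j - k)

noncomputable def hypCoeff (j k : ℕ) : ℂ :=
  (-1) ^ k * j.choose k * pochC α k * pochC (α + β + k) (j - k)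

noncomputable def symmPoly (j : ℕ) : ℂ[X] := ∑ k ∈ range (j + 1), C (symmCoeff α β j k) * X ^ k

noncomputable def hypPoly (j : ℕ) : ℂ[X] := ∑ k ∈ range (j + 1), C (hypCoeff α β j k) * X ^ k

variable {α β}

lemma coeff_symmPoly (j k : ℕ) : (symmPoly α β j).coeff k = symmCoeff α β j k :=
  coeff_sum_range_C_mul_X_pow (fun k hk => by simp [symmCoeff, Nat.choose_eq_zero_of_lt hk]) k

lemma coeff_hypPoly (j k : ℕ) : (hypPoly α β j).coeff k = hypCoeff α β j k :=
  coeff_sum_range_C_mul_X_pow (fun k hk => by simp [hypCoeff, Nat.choose_eq_zero_of_lt hk]) k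

lemma symmCoeff_succ_succ (j k : ℕ) :
    symmCoeff α β (j + 1) (k + 1)
      = (β + j - (k + 1)) * symmCoeff α β j (k + 1) + (α + k) * symmCoeff α β j k := by
  have hβ : (j.choose (k + 1) : ℂ) * pochC β (j - k)
      = j.choose (k + 1) * (pochC β (j - (k + 1)) * (β + j - (k + 1))) := by
    rcases Nat.lt_or_ge j (k + 1) with h | h
    · simp [Nat.choose_eq_zero_of_lt h]
    · rw [show j - k = j - (k + 1) + 1 by omega, pochC_succ]
      push_cast [h]; ring
  simp only [symmCoeff, Nat.choose_succ_succ', Nat.succ_sub_succ, pochC_succ α k]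
  push_cast
  linear_combination pochC α k * (α + k) * hβ

lemma hypCoeff_succ_succ (j k : ℕ) :
    hypCoeff α β (j + 1) (k + 1)
      = (α + β + j + (k + 1)) * hypCoeff α β j (k + 1) - (α + k) * hypCoeff α β j k := by
  rcases Nat.lt_or_ge j (k + 1) with h | h
  · obtain rfl | h := eq_or_lt_of_le (Nat.le_of_lt_succ h)
    · simp [hypCoeff, pochC_zero, pochC_succ]; ring
    · simp [hypCoeff, Nat.choose_eq_zero_of_lt h, Nat.choose_eq_zero_of_lt (by omega : j < k + 1),
        Nat.choose_eq_zero_of_lt (by omega : j + 1 < k + 1)]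
  · obtain ⟨s, rfl⟩ := Nat.exists_eq_add_of_le h
    have hchoose : ((k + 1 + s).choose (k + 1) : ℂ) * (k + 1) = (k + 1 + s).choose k * (s + 1) := by
      exact_mod_cast (Nat.choose_succ_right_eq (k + 1 + s) k).trans (by congr 1; omega)
    simp only [hypCoeff, Nat.choose_succ_succ', Nat.succ_sub_succ,
      show k + 1 + s - (k + 1) = s by omega, show k + 1 + s - k = s + 1 by omega,
      pochC_succ α k]
    push_cast
    rw [pochC_succ_left (α + β + k) s, pochC_succ (α + β + (k + 1)) s,
      show α + β + k + 1 = α + β + (k + 1) by ring]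
    linear_combination (-1) ^ k * pochC α k * (α + k) * pochC (α + β + (k + 1)) s * hchoose

lemma symmPoly_succ (j : ℕ) :
    symmPoly α β (j + 1)
      = (C (β + j) + C α * X) * symmPoly α β j + (X ^ 2 - X) * derivative (symmPoly α β j) := by
  rw [← one_mul (X ^ 2 - X : ℂ[X]), ← C_1]
  ext (_ | k)
  · rw [coeff_zero_linear_mul_add_derivative, coeff_symmPoly, coeff_symmPoly]
    simp [symmCoeff, pochC_succ]; ring
  · rw [coeff_succ_linear_mul_add_derivative, coeff_symmPoly, coeff_symmPoly, coeff_symmPoly,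
      symmCoeff_succ_succ]
    ring

lemma hypPoly_succ (j : ℕ) :
    hypPoly α β (j + 1)
      = (C (α + β + j) - C α * X) * hypPoly α β j - (X ^ 2 - X) * derivative (hypPoly α β j) := by
  rw [show (C (α + β + j) - C α * X) * hypPoly α β j - (X ^ 2 - X) * derivative (hypPoly α β j)
      = (C (α + β + j) + C (-α) * X) * hypPoly α β j
        + C (-1) * (X ^ 2 - X) * derivative (hypPoly α β j) by
    simp only [map_neg, map_one]; ring]
  ext (_ | k)
  · rw [coeff_zero_linear_mul_add_derivative, coeff_hypPoly, coeff_hypPoly]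
    simp [hypCoeff, pochC_succ]; ring
  · rw [coeff_succ_linear_mul_add_derivative, coeff_hypPoly, coeff_hypPoly, coeff_hypPoly,
      hypCoeff_succ_succ]
    ring

theorem hypPoly_comp_one_sub_X (j : ℕ) : (hypPoly α β j).comp (1 - X) = symmPoly α β j := by
  induction j with
  | zero => simp [hypPoly, symmPoly, hypCoeff, symmCoeff, pochC_zero]
  | succ j ih =>
    rw [hypPoly_succ, symmPoly_succ, ← ih, derivative_comp_one_sub_X]
    simp only [add_comp, mul_comp, C_comp, X_comp, sub_comp, pow_comp, natCast_comp,
      map_add, map_natCast]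
    ring

end Hypergeometric

theorem rpoly_eq_symmPoly (a b : ℝ) (j : ℕ) :
    rpoly a b j = symmPoly (a + b * I) (conj (a + b * I)) j := by
  have h2a : 2 * (a : ℂ) = a + b * I + conj (a + b * I) := by
    rw [Complex.add_conj]; simp
  rw [← hypPoly_comp_one_sub_X, rpoly, hypPoly, Polynomial.comp, eval₂_finsetSum]
  refine sum_congr rfl fun k _ => ?_
  rw [eval₂_mul, eval₂_C, eval₂_X_pow, hypCoeff, h2a]

lemma eval_one_symmPoly (α β : ℂ) (j : ℕ) : (symmPoly α β j).eval 1 = pochC (α + β) j := by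
  rw [← hypPoly_comp_one_sub_X, eval_comp]
  simp [← coeff_zero_eq_eval_zero, coeff_hypPoly, hypCoeff, pochC_zero]

lemma conj_symmCoeff (α : ℂ) {j k : ℕ} (hk : k ≤ j) :
    conj (symmCoeff α (conj α) j k) = symmCoeff α (conj α) j (j - k) := by
  simp only [symmCoeff, map_mul, conj_pochC, map_natCast, conj_conj, Nat.choose_symm hk,
    Nat.sub_sub_self hk]
  ring

lemma natDegree_symmPoly_le (α β : ℂ) (j : ℕ) : (symmPoly α β j).natDegree ≤ j :=
  natDegree_sum_le_of_forall_le _ _ fun k hk =>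
    (natDegree_C_mul_X_pow_le _ k).trans (Nat.lt_succ_iff.mp (mem_range.mp hk))

lemma eval_symmPoly_succ_of_isRoot {α β w : ℂ} {j : ℕ} (hw : (symmPoly α β j).IsRoot w) :
    (symmPoly α β (j + 1)).eval w = (w ^ 2 - w) * (derivative (symmPoly α β j)).eval w := by
  rw [symmPoly_succ]
  simp [hw.eq_zero]

noncomputable def halfExp (θ : ℝ) : ℂ := exp (θ / 2 * I)

lemma halfExp_ne_zero (θ : ℝ) : halfExp θ ≠ 0 := exp_ne_zero _

lemma halfExp_sq (θ : ℝ) : halfExp θ ^ 2 = exp (θ * I) := by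
  rw [halfExp, ← exp_nat_mul]; congr 1; push_cast; ring

lemma conj_halfExp (θ : ℝ) : conj (halfExp θ) = (halfExp θ)⁻¹ := by
  rw [halfExp, ← exp_conj, ← exp_neg]; congr 1; simp [conj_ofReal, map_ofNat]

lemma halfExp_zero : halfExp 0 = 1 := by simp [halfExp]

lemma halfExp_two_pi : halfExp (2 * Real.pi) = -1 := by
  rw [halfExp, show ((2 * Real.pi : ℝ) : ℂ) / 2 * I = Real.pi * I by push_cast; ring, exp_pi_mul_I]

lemma halfExp_inv_mul_sq_sub_sq (θ φ : ℝ) :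
    (halfExp θ)⁻¹ * (halfExp θ ^ 2 - halfExp φ ^ 2)
      = 2 * I * halfExp φ * Real.sin ((θ - φ) / 2) := by
  have hθ := halfExp_ne_zero θ
  have hφ := halfExp_ne_zero φ
  have hsin : (Real.sin ((θ - φ) / 2) : ℂ) * (2 * I)
      = halfExp θ / halfExp φ - halfExp φ / halfExp θ := by
    rw [ofReal_sin, Complex.sin, halfExp, halfExp, ← exp_sub, ← exp_sub]
    push_cast
    ring_nf
    rw [I_sq]
    ring_nf
  rw [show 2 * I * halfExp φ * (Real.sin ((θ - φ) / 2) : ℂ)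
    = halfExp φ * ((Real.sin ((θ - φ) / 2) : ℂ) * (2 * I)) by ring, hsin]
  field_simp

noncomputable def twistedEval (p : ℂ[X]) (N : ℕ) (θ : ℝ) : ℂ :=
  (halfExp θ)⁻¹ ^ N * p.eval (halfExp θ ^ 2)

lemma twistedEval_zero (p : ℂ[X]) (N : ℕ) : twistedEval p N 0 = p.eval 1 := by
  simp [twistedEval, halfExp_zero]

lemma twistedEval_two_pi (p : ℂ[X]) (N : ℕ) :
    twistedEval p N (2 * Real.pi) = (-1) ^ N * p.eval 1 := by
  simp [twistedEval, halfExp_two_pi]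

lemma twistedEval_eq_zero_iff {p : ℂ[X]} {N : ℕ} {θ : ℝ} :
    twistedEval p N θ = 0 ↔ p.IsRoot (exp (θ * I)) := by
  simp [twistedEval, halfExp_sq, halfExp_ne_zero]

lemma continuous_twistedEval (p : ℂ[X]) (N : ℕ) : Continuous (twistedEval p N) := by
  have h : Continuous halfExp := by unfold halfExp; fun_prop
  exact ((h.inv₀ halfExp_ne_zero).pow N).mul (p.continuous.comp (h.pow 2))

lemma conj_twistedEval {p : ℂ[X]} {N : ℕ} (hdeg : p.natDegree ≤ N)
    (hsymm : ∀ k ≤ N, conj (p.coeff k) = p.coeff (N - k)) (θ : ℝ) :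
    conj (twistedEval p N θ) = twistedEval p N θ := by
  have hu := halfExp_ne_zero θ
  have hphase : ∀ k ≤ N,
      halfExp θ ^ N * (halfExp θ)⁻¹ ^ (2 * (N - k)) = (halfExp θ)⁻¹ ^ N * halfExp θ ^ (2 * k) := by
    intro k hk
    obtain ⟨m, rfl⟩ := Nat.exists_eq_add_of_le hk
    rw [Nat.add_sub_cancel_left, inv_pow, inv_pow]
    field_simp
    ring
  simp only [twistedEval, eval_eq_sum_range' (Nat.lt_succ_of_le hdeg), map_mul, map_pow, map_inv₀,
    map_sum, conj_halfExp, inv_inv, mul_sum]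
  rw [← sum_range_reflect]
  refine sum_congr rfl fun k hk => ?_
  have hk : k ≤ N := Nat.lt_succ_iff.mp (mem_range.mp hk)
  rw [show N + 1 - 1 - k = N - k by omega, hsymm _ (Nat.sub_le N k), Nat.sub_sub_self hk]
  linear_combination p.coeff k * hphase k hk

lemma halfExp_inv_pow_card_mul_prod {ι : Type*} (s : Finset ι) (φ : ι → ℝ) (θ : ℝ) :
    (halfExp θ)⁻¹ ^ #s * ∏ m ∈ s, (halfExp θ ^ 2 - halfExp (φ m) ^ 2)
      = (∏ m ∈ s, 2 * I * halfExp (φ m)) * ∏ m ∈ s, (Real.sin ((θ - φ m) / 2) : ℂ) := by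
  rw [← prod_const, ← prod_mul_distrib, ← prod_mul_distrib]
  exact prod_congr rfl fun m _ => halfExp_inv_mul_sq_sub_sq θ (φ m)

lemma twistedEval_C_mul_prod {ι : Type*} (c : ℂ) (s : Finset ι) (φ : ι → ℝ) (θ : ℝ) :
    twistedEval (C c * ∏ m ∈ s, (X - C (exp (φ m * I)))) #s θ
      = c * (∏ m ∈ s, 2 * I * halfExp (φ m)) * ∏ m ∈ s, (Real.sin ((θ - φ m) / 2) : ℂ) := by
  simp only [twistedEval, eval_mul, eval_C, eval_prod, eval_sub, eval_X, ← halfExp_sq]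
  rw [mul_left_comm, halfExp_inv_pow_card_mul_prod, mul_assoc]

lemma twistedEval_eq_of_eval_eq_mul_derivative {ι : Type*} [DecidableEq ι] {q r : ℂ[X]} {c : ℂ}
    {s : Finset ι} {φ : ι → ℝ} {i : ι} (hi : i ∈ s)
    (hq : q = C c * ∏ m ∈ s, (X - C (exp (φ m * I))))
    (hr : r.eval (exp (φ i * I))
      = (exp (φ i * I) ^ 2 - exp (φ i * I)) * (derivative q).eval (exp (φ i * I))) :
    twistedEval r (#s + 1) (φ i) = c * (∏ m ∈ s, 2 * I * halfExp (φ m))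
      * (Real.sin (φ i / 2) * ∏ m ∈ s.erase i, Real.sin ((φ i - φ m) / 2) : ℝ) := by
  have hq' : q = C c * ((X - C (exp (φ i * I))) * ∏ m ∈ s.erase i, (X - C (exp (φ m * I)))) := by
    rw [hq, ← mul_prod_erase s (fun m => X - C (exp (φ m * I))) hi]
  have hd : (derivative q).eval (exp (φ i * I))
      = c * ∏ m ∈ s.erase i, (exp (φ i * I) - exp (φ m * I)) := by
    rw [hq']
    simp [derivative_mul, eval_prod]
  have h1 := halfExp_inv_mul_sq_sub_sq (φ i) 0
  have h2 := halfExp_inv_pow_card_mul_prod (s.erase i) φ (φ i)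
  simp only [halfExp_zero, sub_zero, one_pow, mul_one] at h1
  have hw : (halfExp (φ i))⁻¹ * halfExp (φ i) = 1 := inv_mul_cancel₀ (halfExp_ne_zero (φ i))
  rw [twistedEval, halfExp_sq, hr, hd, ← card_erase_add_one hi,
    ← mul_prod_erase s (fun m => 2 * I * halfExp (φ m)) hi, ofReal_mul, ofReal_prod]
  simp only [← halfExp_sq]
  set u := halfExp (φ i)
  linear_combination (c * u⁻¹ ^ 2 * ((u ^ 2) ^ 2 - u ^ 2)) * h2
    + (c * (∏ m ∈ s.erase i, 2 * I * halfExp (φ m))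
      * (∏ m ∈ s.erase i, (Real.sin ((φ i - φ m) / 2) : ℂ)) * u) * h1
    + (c * (∏ m ∈ s.erase i, 2 * I * halfExp (φ m))
      * (∏ m ∈ s.erase i, (Real.sin ((φ i - φ m) / 2) : ℂ)) * u⁻¹ * (u ^ 2 - 1) * u) * hw

lemma neg_one_pow_card_filter_neg_mul_prod_pos {ι : Type*} {s : Finset ι} {f : ι → ℝ}
    (hf : ∀ i ∈ s, f i ≠ 0) : 0 < (-1) ^ #{i ∈ s | f i < 0} * ∏ i ∈ s, f i := by
  rw [← prod_filter_mul_prod_filter_not s (fun i => f i < 0), ← mul_assoc, ← prod_neg]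
  refine mul_pos (prod_pos fun i hi => ?_) (prod_pos fun i hi => ?_)
  · exact neg_pos.mpr (mem_filter.mp hi).2
  · obtain ⟨hs, hi⟩ := mem_filter.mp hi
    exact lt_of_le_of_ne (not_lt.mp hi) (hf i hs).symm

theorem exists_zeros_of_alternating_signs {f : ℝ → ℝ} (hf : Continuous f) {t : ℕ → ℝ} {N : ℕ}
    (ht : StrictMonoOn t (Set.Iic (N + 1))) (hsign : ∀ i ≤ N + 1, 0 < (-1) ^ i * f (t i)) :
    ∃ η : ℕ → ℝ, StrictMonoOn η (Set.Iic (N + 2)) ∧ η 0 = t 0 ∧ η (N + 2) = t (N + 1) ∧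
      ∀ i ∈ Icc 1 (N + 1), f (η i) = 0 := by
  have hzero : ∀ i ≤ N, ∃ z ∈ Set.Ioo (t i) (t (i + 1)), f z = 0 := by
    intro i hi
    have hlt : t i < t (i + 1) :=
      ht (Set.mem_Iic.mpr (by omega)) (Set.mem_Iic.mpr (by omega)) (Nat.lt_succ_self i)
    have hnext := hsign (i + 1) (by omega)
    rw [pow_succ, mul_assoc, neg_one_mul, mul_neg, neg_pos] at hnext
    obtain ⟨z, hz, hfz⟩ := intermediate_value_Ioo' hlt.le
      (show Continuous fun x => (-1 : ℝ) ^ i * f x by fun_prop).continuousOn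
      ⟨by linarith, hsign i (by omega)⟩
    exact ⟨z, hz, by simpa using hfz⟩
  choose! ζ hζ hfζ using hzero
  refine ⟨fun i => if i = 0 then t 0 else if i ≤ N + 1 then ζ (i - 1) else t (N + 1),
    strictMonoOn_Iic_of_lt_succ fun m hm => ?_, by simp, by simp, fun i hi => ?_⟩
  · rw [Order.succ_eq_add_one]
    rcases Nat.eq_zero_or_pos m with rfl | hm0
    · simpa using (hζ 0 (Nat.zero_le N)).1
    rcases Nat.lt_or_ge m (N + 1) with hmN | hmN
    · simp only [if_neg hm0.ne', if_neg (Nat.add_one_ne_zero m), if_pos hmN.le,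
        if_pos (show m + 1 ≤ N + 1 by omega), Nat.add_sub_cancel]
      have h := hζ (m - 1) (by omega)
      rw [Nat.sub_add_cancel hm0] at h
      exact h.2.trans (hζ m (by omega)).1
    · simp only [if_neg hm0.ne', if_pos (show m ≤ N + 1 by omega), if_neg (Nat.add_one_ne_zero m),
        if_neg (show ¬ m + 1 ≤ N + 1 by omega)]
      have h := (hζ (m - 1) (by omega)).2
      rwa [show m - 1 + 1 = N + 1 by omega] at h
  · obtain ⟨hi1, hi2⟩ := mem_Icc.mp hi
    simpa [show i ≠ 0 by omega, hi2] using hfζ (i - 1) (by omega)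

theorem Polynomial.roots_eq_of_nodup_of_natDegree_le {R : Type*} [CommRing R] [IsDomain R]
    {p : R[X]} (hp : p ≠ 0) {s : Multiset R} (hs : s.Nodup) (hroot : ∀ x ∈ s, p.IsRoot x)
    (hdeg : p.natDegree ≤ Multiset.card s) : p.roots = s :=
  (Multiset.eq_of_le_of_card_le ((Multiset.le_iff_subset hs).mpr fun x hx =>
    (mem_roots hp).mpr (hroot x hx)) ((card_roots' p).trans hdeg)).symm

lemma eval_one_symmPoly_conj (α : ℂ) (j : ℕ) :
    (symmPoly α (conj α) j).eval 1 = ((ascPochhammer ℝ j).eval (2 * α.re) : ℝ) := by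
  rw [eval_one_symmPoly, add_conj, pochC_ofReal]

lemma symmPoly_conj_ne_zero {α : ℂ} (hα : 0 < α.re) (j : ℕ) : symmPoly α (conj α) j ≠ 0 := by
  intro h
  have h1 := eval_one_symmPoly_conj α j
  rw [h, eval_zero, eq_comm, ofReal_eq_zero] at h1
  exact (ascPochhammer_pos j _ (by linarith)).ne' h1

lemma ofReal_re_twistedEval_symmPoly_conj (α : ℂ) (j : ℕ) (θ : ℝ) :
    ((twistedEval (symmPoly α (conj α) j) j θ).re : ℂ) = twistedEval (symmPoly α (conj α) j) j θ :=
  conj_eq_iff_re.mp <| conj_twistedEval (natDegree_symmPoly_le _ _ j)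
    (fun k hk => by rw [coeff_symmPoly, coeff_symmPoly, conj_symmCoeff α hk]) θ

/-- `θ 1 < ⋯ < θ n` are angles in `(0, 2π)` of roots `exp (θ m * I)` of `p`, and the padding
`θ 0 = 0`, `θ (n + 1) = 2π` makes the ends of the circle part of the same increasing sequence. -/
structure IsRootAngles (p : ℂ[X]) (n : ℕ) (θ : ℕ → ℝ) : Prop where
  strictMonoOn : StrictMonoOn θ (Set.Iic (n + 1))
  zero : θ 0 = 0
  last : θ (n + 1) = 2 * Real.pi
  isRoot : ∀ m ∈ Icc 1 n, p.IsRoot (exp (θ m * I))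

namespace IsRootAngles

variable {p : ℂ[X]} {n : ℕ} {θ : ℕ → ℝ}

lemma lt_iff_lt (h : IsRootAngles p n θ) {l m : ℕ} (hl : l ≤ n + 1) (hm : m ≤ n + 1) :
    θ l < θ m ↔ l < m :=
  h.strictMonoOn.lt_iff_lt hl hm

lemma mem_Ioo (h : IsRootAngles p n θ) {m : ℕ} (hm : m ∈ Icc 1 n) :
    θ m ∈ Set.Ioo 0 (2 * Real.pi) := by
  obtain ⟨hm1, hmn⟩ := mem_Icc.mp hm
  rw [← h.zero, ← h.last, Set.mem_Ioo, h.lt_iff_lt (by omega) (by omega),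
    h.lt_iff_lt (by omega) le_rfl]
  omega

lemma sin_half_sub_neg (h : IsRootAngles p n θ) {l m : ℕ} (hl : l ≤ n) (hm : m ∈ Icc 1 n)
    (hlm : l < m) : Real.sin ((θ l - θ m) / 2) < 0 := by
  have hmn := (mem_Icc.mp hm).2
  have hθ := (h.lt_iff_lt (by omega) (by omega)).mpr hlm
  have hθl : 0 ≤ θ l := h.zero ▸ (h.strictMonoOn.monotoneOn (by simp) (by simp; omega) (by omega))
  have := (h.mem_Ioo hm).2
  exact Real.sin_neg_of_neg_of_neg_pi_lt (by linarith) (by linarith)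

lemma injOn (h : IsRootAngles p n θ) : Set.InjOn (fun m => exp (θ m * I)) (Icc 1 n) := by
  have hne : ∀ l m, l ∈ Icc 1 n → m ∈ Icc 1 n → l < m → exp (θ l * I) ≠ exp (θ m * I) := by
    intro l m hl hm hlm heq
    have hsin := halfExp_inv_mul_sq_sub_sq (θ l) (θ m)
    rw [halfExp_sq, halfExp_sq, heq, sub_self, mul_zero, eq_comm, mul_eq_zero,
      ofReal_eq_zero] at hsin
    refine hsin.elim (fun h0 => ?_) (h.sin_half_sub_neg (mem_Icc.mp hl).2 hm hlm).ne
    simp [halfExp_ne_zero] at h0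
  intro l hl m hm heq
  rcases lt_trichotomy l m with hlm | rfl | hlm
  · exact absurd heq (hne l m hl hm hlm)
  · rfl
  · exact absurd heq.symm (hne m l hm hl hlm)

lemma nodup_map (h : IsRootAngles p n θ) : ((Icc 1 n).val.map fun m => exp (θ m * I)).Nodup :=
  (Icc 1 n).nodup.map_on fun _ hl _ hm => h.injOn hl hm

lemma roots_eq (h : IsRootAngles p n θ) (hp : p ≠ 0) (hdeg : p.natDegree ≤ n) :
    p.roots = (Icc 1 n).val.map fun m => exp (θ m * I) :=
  roots_eq_of_nodup_of_natDegree_le hp h.nodup_map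
    (fun _ hx => by obtain ⟨m, hm, rfl⟩ := Multiset.mem_map.mp hx; exact h.isRoot m hm)
    (by simpa using hdeg)

lemma eq_C_mul_prod (h : IsRootAngles p n θ) (hp : p ≠ 0) (hdeg : p.natDegree ≤ n) :
    p = C p.leadingCoeff * ∏ m ∈ Icc 1 n, (X - C (exp (θ m * I))) := by
  have hroots := h.roots_eq hp hdeg
  have hcard : Multiset.card p.roots = p.natDegree :=
    le_antisymm (card_roots' p) (by rw [hroots]; simpa using hdeg)
  conv_lhs => rw [← C_leadingCoeff_mul_prod_multiset_X_sub_C hcard, hroots, Multiset.map_map]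
  rfl

lemma sin_half_sub_pos (h : IsRootAngles p n θ) {l m : ℕ} (hl : l ∈ Icc 1 n) (hm : m ≤ n)
    (hml : m < l) : 0 < Real.sin ((θ l - θ m) / 2) := by
  have := h.sin_half_sub_neg hm hl hml
  rw [← neg_sub, neg_div, Real.sin_neg] at this
  linarith

lemma neg_one_pow_mul_prod_sin_pos (h : IsRootAngles p n θ) :
    0 < (-1) ^ n * ∏ m ∈ Icc 1 n, Real.sin ((0 - θ m) / 2) := by
  have hneg : ∀ m ∈ Icc 1 n, Real.sin ((0 - θ m) / 2) < 0 := fun m hm =>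
    h.zero ▸ h.sin_half_sub_neg (Nat.zero_le n) hm (mem_Icc.mp hm).1
  have := neg_one_pow_card_filter_neg_mul_prod_pos fun m hm => (hneg m hm).ne
  rwa [filter_true_of_mem hneg, Nat.card_Icc, Nat.add_sub_cancel] at this

lemma neg_one_pow_mul_prod_sin_erase_pos (h : IsRootAngles p n θ) {i : ℕ} (hi : i ∈ Icc 1 n) :
    0 < (-1) ^ (n - i) * ∏ m ∈ (Icc 1 n).erase i, Real.sin ((θ i - θ m) / 2) := by
  have hsin : ∀ m ∈ (Icc 1 n).erase i,
      (Real.sin ((θ i - θ m) / 2) < 0 ↔ i < m) ∧ Real.sin ((θ i - θ m) / 2) ≠ 0 := by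
    intro m hm
    obtain ⟨hmi, hm⟩ := mem_erase.mp hm
    rcases lt_or_gt_of_ne hmi with hlt | hlt
    · have := h.sin_half_sub_pos hi (mem_Icc.mp hm).2 hlt
      exact ⟨by constructor <;> intro <;> linarith, this.ne'⟩
    · have := h.sin_half_sub_neg (mem_Icc.mp hi).2 hm hlt
      exact ⟨by simp [this, hlt], this.ne⟩
  have hfilter : {m ∈ (Icc 1 n).erase i | Real.sin ((θ i - θ m) / 2) < 0} = Ioc i n := by
    ext m
    simp only [mem_filter, mem_Ioc]
    constructor
    · rintro ⟨hm, hneg⟩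
      exact ⟨(hsin m hm).1.mp hneg, (mem_Icc.mp (mem_erase.mp hm).2).2⟩
    · rintro ⟨him, hmn⟩
      have hm : m ∈ (Icc 1 n).erase i :=
        mem_erase.mpr ⟨him.ne', mem_Icc.mpr ⟨by linarith [(mem_Icc.mp hi).1], hmn⟩⟩
      exact ⟨hm, (hsin m hm).1.mpr him⟩
  have := neg_one_pow_card_filter_neg_mul_prod_pos fun m hm => (hsin m hm).2
  rwa [hfilter, Nat.card_Ioc] at this

lemma twistedEval_symmPoly_succ_mul_prod_sin {α β : ℂ} (h : IsRootAngles (symmPoly α β n) n θ)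
    (hp : symmPoly α β n ≠ 0) {i : ℕ} (hi : i ∈ Icc 1 n) :
    twistedEval (symmPoly α β (n + 1)) (n + 1) (θ i) * ∏ m ∈ Icc 1 n, (Real.sin ((0 - θ m) / 2) : ℂ)
      = twistedEval (symmPoly α β n) n 0
        * (Real.sin (θ i / 2) * ∏ m ∈ (Icc 1 n).erase i, Real.sin ((θ i - θ m) / 2) : ℝ) := by
  have hfac := h.eq_C_mul_prod hp (natDegree_symmPoly_le α β n)
  have hcard : #(Icc 1 n) = n := by simp
  have h0 := twistedEval_C_mul_prod (symmPoly α β n).leadingCoeff (Icc 1 n) θ 0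
  have hroot := twistedEval_eq_of_eval_eq_mul_derivative hi hfac
    (eval_symmPoly_succ_of_isRoot (h.isRoot i hi))
  rw [← hfac, hcard] at h0
  rw [hcard] at hroot
  rw [h0, hroot]
  ring

lemma exists_zero (p : ℂ[X]) : ∃ θ, IsRootAngles p 0 θ :=
  ⟨fun m => 2 * Real.pi * m, fun _ _ _ _ h => by gcongr, by simp, by simp, by simp⟩

lemma neg_one_pow_mul_re_twistedEval_succ_pos {α : ℂ} (hα : 0 < α.re)
    (h : IsRootAngles (symmPoly α (conj α) n) n θ) {i : ℕ} (hi : i ≤ n + 1) :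
    0 < (-1) ^ i * (twistedEval (symmPoly α (conj α) (n + 1)) (n + 1) (θ i)).re := by
  have hr : ∀ j, 0 < (ascPochhammer ℝ j).eval (2 * α.re) :=
    fun j => ascPochhammer_pos j _ (by linarith)
  rcases Nat.eq_zero_or_pos i with rfl | hi0
  · simpa [h.zero, twistedEval_zero, eval_one_symmPoly_conj] using hr (n + 1)
  rcases eq_or_lt_of_le hi with rfl | hin
  · rw [h.last, twistedEval_two_pi, eval_one_symmPoly_conj]
    rw [show (-1 : ℂ) ^ (n + 1) = ((-1 : ℝ) ^ (n + 1) : ℝ) by push_cast; rfl, ← ofReal_mul,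
      ofReal_re, ← mul_assoc, ← pow_add, ← two_mul, pow_mul, neg_one_sq, one_pow, one_mul]
    exact hr (n + 1)
  have hi' : i ∈ Icc 1 n := mem_Icc.mpr ⟨hi0, by omega⟩
  have key := h.twistedEval_symmPoly_succ_mul_prod_sin (symmPoly_conj_ne_zero hα n) hi'
  rw [← ofReal_re_twistedEval_symmPoly_conj, twistedEval_zero, eval_one_symmPoly_conj,
    ← ofReal_prod, ← ofReal_mul, ← ofReal_mul, ofReal_inj] at key
  have hsin : 0 < Real.sin (θ i / 2) := by
    simpa [h.zero] using h.sin_half_sub_pos hi' (Nat.zero_le n) hi0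
  have hsq : ((-1 : ℝ) ^ i) ^ 2 = 1 := by rw [← pow_mul, pow_mul', neg_one_sq, one_pow]
  have hprod : ((-1) ^ i * (twistedEval (symmPoly α (conj α) (n + 1)) (n + 1) (θ i)).re)
      * ((-1) ^ n * ∏ m ∈ Icc 1 n, Real.sin ((0 - θ m) / 2))
      = (ascPochhammer ℝ n).eval (2 * α.re) * Real.sin (θ i / 2)
        * ((-1) ^ (n - i) * ∏ m ∈ (Icc 1 n).erase i, Real.sin ((θ i - θ m) / 2)) := by
    rw [show (-1 : ℝ) ^ n = (-1) ^ i * (-1) ^ (n - i) by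
      rw [← pow_add, Nat.add_sub_cancel' (Nat.lt_succ_iff.mp hin)]]
    linear_combination ((-1) ^ i) ^ 2 * (-1) ^ (n - i) * key
      + (-1) ^ (n - i) * (ascPochhammer ℝ n).eval (2 * α.re) * Real.sin (θ i / 2)
        * (∏ m ∈ (Icc 1 n).erase i, Real.sin ((θ i - θ m) / 2)) * hsq
  refine pos_of_mul_pos_left ?_ h.neg_one_pow_mul_prod_sin_pos.le
  rw [hprod]
  exact mul_pos (mul_pos (hr n) hsin) (h.neg_one_pow_mul_prod_sin_erase_pos hi')

theorem exists_succ {α : ℂ} (hα : 0 < α.re) (h : IsRootAngles (symmPoly α (conj α) n) n θ) :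
    ∃ η, IsRootAngles (symmPoly α (conj α) (n + 1)) (n + 1) η := by
  obtain ⟨η, hmono, h0, hlast, hzero⟩ := exists_zeros_of_alternating_signs
    (continuous_re.comp (continuous_twistedEval _ _)) h.strictMonoOn
    fun i hi => neg_one_pow_mul_re_twistedEval_succ_pos hα h hi
  refine ⟨η, hmono, h0.trans h.zero, hlast.trans h.last, fun m hm => ?_⟩
  rw [← twistedEval_eq_zero_iff, ← ofReal_re_twistedEval_symmPoly_conj]
  exact ofReal_eq_zero.mpr (hzero m hm)

theorem exists_symmPoly {α : ℂ} (hα : 0 < α.re) (n : ℕ) :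
    ∃ θ, IsRootAngles (symmPoly α (conj α) n) n θ := by
  induction n with
  | zero => exact exists_zero _
  | succ n ih => exact ih.elim fun _ h => h.exists_succ hα

end IsRootAngles

/-- For `a > 0`, `r̃_{n+1}(1) = (2a)_{n+1} ≠ 0` and `r̃_{n+1}` has exactly
`n+1` zeros, all simple, all on the unit circle. -/
theorem stmt_14 (a b : ℝ) (ha : 0 < a) (n : ℕ) :
    (rpoly a b (n + 1)).eval 1 = pochC (2 * (a : ℂ)) (n + 1) ∧
    pochC (2 * (a : ℂ)) (n + 1) ≠ 0 ∧
    Multiset.card (rpoly a b (n + 1)).roots = n + 1 ∧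
    (rpoly a b (n + 1)).roots.Nodup ∧
    (∀ z ∈ (rpoly a b (n + 1)).roots, ‖z‖ = 1) := by
  have hα : 0 < ((a : ℂ) + b * I).re := by simpa using ha
  obtain ⟨θ, hθ⟩ := IsRootAngles.exists_symmPoly hα (n + 1)
  have hroots : (rpoly a b (n + 1)).roots = (Icc 1 (n + 1)).val.map fun m => exp (θ m * I) := by
    rw [rpoly_eq_symmPoly]
    exact hθ.roots_eq (symmPoly_conj_ne_zero hα _) (natDegree_symmPoly_le _ _ _)
  refine ⟨?_, ?_, by simp [hroots], hroots ▸ hθ.nodup_map, fun z hz => ?_⟩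
  · rw [rpoly_eq_symmPoly, eval_one_symmPoly, add_conj]
    simp
  · rw [show 2 * (a : ℂ) = (2 * a : ℝ) by push_cast; ring, pochC_ofReal, ofReal_ne_zero]
    exact (ascPochhammer_pos _ _ (by linarith)).ne'
  · obtain ⟨m, -, rfl⟩ := Multiset.mem_map.mp (hroots ▸ hz)
    exact norm_exp_ofReal_mul_I _
end

section
/- Let a > 0 be real, n ≥ 0 an integer, and let λ_1, …, λ_{n+1} be positive real numbers satisfying j (2a + j − 1) λ_j λ_{j+1} = 1 for j = 1, …, n. Then the (n+1)×(n+1) real symmetric tridiagonal matrix T with diagonal entries T_{j,j} = (j + a) λ_{j+1} for j = 0, …, n (rows and columns indexed from 0), off-diagonal entries T_{j,j+1} = T_{j+1,j} = −1/2, and all other entries zero, is positive definite. -/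
/-!
Completing the square (an `LDLᵀ` factorisation of the tridiagonal matrix): with the pivots
`s_j = (2a + j) λ_{j+1} / 2` the quadratic form is `∑_j s_j (x_j - x_{j+1} / (2 s_j))²`, where
`x_{n+1} = 0`. The pivot recursion `(j + a) λ_{j+1} = s_j + 1 / (4 s_{j-1})` is exactly the
relation `j (2a + j - 1) λ_j λ_{j+1} = 1`. If all squares vanish, then `x = 0` by downward
induction from `x_{n+1} = 0`.
-/

open Matrix Finset

def symmTridiag (n : ℕ) (d : ℕ → ℝ) (c : ℝ) : Matrix (Fin n) (Fin n) ℝ :=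
  of fun i j => if i = j then d i else if (i : ℕ) + 1 = j ∨ (j : ℕ) + 1 = i then c else 0

def zeroExtend {n : ℕ} (x : Fin n → ℝ) (i : ℕ) : ℝ :=
  if h : i < n then x ⟨i, h⟩ else 0

theorem zeroExtend_val {n : ℕ} (x : Fin n → ℝ) (i : Fin n) : zeroExtend x i = x i := by
  simp [zeroExtend]

theorem zeroExtend_of_le {n : ℕ} (x : Fin n → ℝ) {m : ℕ} (hm : n ≤ m) : zeroExtend x m = 0 := by
  simp [zeroExtend, hm.not_gt]

theorem isHermitian_symmTridiag (n : ℕ) (d : ℕ → ℝ) (c : ℝ) : (symmTridiag n d c).IsHermitian := by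
  ext i j
  simp only [conjTranspose_apply, symmTridiag, of_apply, star_trivial]
  rcases eq_or_ne i j with rfl | h
  · rfl
  · simp [h, h.symm, or_comm]

theorem dotProduct_symmTridiag_mulVec {n : ℕ} (d : ℕ → ℝ) (c : ℝ) (x : Fin n → ℝ) :
    x ⬝ᵥ (symmTridiag n d c *ᵥ x) = ∑ i ∈ range n,
      (d i * zeroExtend x i ^ 2 + 2 * c * (zeroExtend x i * zeroExtend x (i + 1))) := by
  set y := zeroExtend x
  have hy : ∀ m, n ≤ m → y m = 0 := fun m => zeroExtend_of_le x
  set F : ℕ → ℕ → ℝ := fun i k => y i *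
    ((if i = k then d i else 0) + (if i + 1 = k then c else 0) + (if k + 1 = i then c else 0)) * y k
  have hF : ∀ i k : Fin n, x i * (symmTridiag n d c i k * x k) = F i k := fun i k => by
    simp only [F, y, symmTridiag, of_apply, zeroExtend_val, Fin.ext_iff]
    split_ifs <;> first | omega | ring
  calc x ⬝ᵥ (symmTridiag n d c *ᵥ x)
      = ∑ i ∈ range n, ∑ k ∈ range n, F i k := by
        simp only [dotProduct, mulVec, mul_sum, hF]
        rw [← Fin.sum_univ_eq_sum_range (fun i => ∑ k ∈ range n, F i k)]
        exact sum_congr rfl fun i _ => Fin.sum_univ_eq_sum_range (F i) n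
    _ = _ := by
        simp only [F, mul_add, add_mul, sum_add_distrib]
        rw [sum_comm (f := fun i k => y i * (if k + 1 = i then c else 0) * y k)]
        simp only [mul_ite, ite_mul, mul_zero, zero_mul, sum_ite_eq, ← sum_add_distrib]
        refine sum_congr rfl fun i hi => ?_
        rw [if_pos hi]
        split_ifs with h
        · ring
        · rw [hy (i + 1) (by simpa using h)]
          ring

theorem sum_tridiag_form_eq_sum_mul_sq_of_pivots {n : ℕ} {d s y : ℕ → ℝ} {c : ℝ}
    (hs : ∀ j < n, s j ≠ 0) (h0 : d 0 = s 0)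
    (hsucc : ∀ j, j + 1 < n → d (j + 1) = s (j + 1) + c ^ 2 / s j) (hy : y n = 0) :
    ∑ i ∈ range n, (d i * y i ^ 2 + 2 * c * (y i * y (i + 1))) =
      ∑ j ∈ range n, s j * (y j + c / s j * y (j + 1)) ^ 2 := by
  cases n with
  | zero => simp
  | succ m =>
    have hshift : ∑ i ∈ range (m + 1), (d i - s i) * y i ^ 2 =
        ∑ j ∈ range (m + 1), c ^ 2 / s j * y (j + 1) ^ 2 := by
      rw [sum_range_succ', sum_range_succ, hy, h0, sub_self, zero_mul, add_zero,
        zero_pow two_ne_zero, mul_zero, add_zero]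
      exact sum_congr rfl fun j hj => by rw [hsucc j (by simpa using hj)]; ring
    calc ∑ i ∈ range (m + 1), (d i * y i ^ 2 + 2 * c * (y i * y (i + 1)))
        = ∑ i ∈ range (m + 1),
            ((d i - s i) * y i ^ 2 + (s i * y i ^ 2 + 2 * c * (y i * y (i + 1)))) :=
          sum_congr rfl fun i _ => by ring
      _ = ∑ j ∈ range (m + 1),
            (c ^ 2 / s j * y (j + 1) ^ 2 + (s j * y j ^ 2 + 2 * c * (y j * y (j + 1)))) := by
          rw [sum_add_distrib, hshift, ← sum_add_distrib]
      _ = _ := sum_congr rfl fun j hj => by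
          have := hs j (mem_range.1 hj)
          field_simp
          ring

theorem sum_mul_add_mul_succ_sq_pos {n : ℕ} {s b y : ℕ → ℝ} (hs : ∀ j < n, 0 < s j)
    (hy : y n = 0) (hne : ∃ j < n, y j ≠ 0) :
    0 < ∑ j ∈ range n, s j * (y j + b j * y (j + 1)) ^ 2 := by
  have hnonneg : ∀ j ∈ range n, 0 ≤ s j * (y j + b j * y (j + 1)) ^ 2 :=
    fun j hj => mul_nonneg (hs j (mem_range.1 hj)).le (sq_nonneg _)
  refine (sum_nonneg hnonneg).lt_of_ne fun hzero => ?_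
  have hstep : ∀ j < n, y (j + 1) = 0 → y j = 0 := fun j hj hsucc => by
    have := (sum_eq_zero_iff_of_nonneg hnonneg).1 hzero.symm j (mem_range.2 hj)
    simpa [hsucc, (hs j hj).ne'] using this
  obtain ⟨j, hj, hyj⟩ := hne
  exact hyj (Nat.decreasingInduction (motive := fun k _ => y k = 0) hstep hy hj.le)

theorem posDef_symmTridiag_of_pivots {n : ℕ} {d s : ℕ → ℝ} {c : ℝ} (hs : ∀ j < n, 0 < s j)
    (h0 : d 0 = s 0) (hsucc : ∀ j, j + 1 < n → d (j + 1) = s (j + 1) + c ^ 2 / s j) :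
    (symmTridiag n d c).PosDef := by
  refine posDef_iff_dotProduct_mulVec.2 ⟨isHermitian_symmTridiag n d c, fun x hx => ?_⟩
  obtain ⟨i, hi⟩ := Function.ne_iff.1 hx
  rw [star_trivial, dotProduct_symmTridiag_mulVec,
    sum_tridiag_form_eq_sum_mul_sq_of_pivots (fun j hj => (hs j hj).ne') h0 hsucc
      (zeroExtend_of_le x le_rfl)]
  exact sum_mul_add_mul_succ_sq_pos hs (zeroExtend_of_le x le_rfl)
    ⟨i, i.isLt, by rwa [zeroExtend_val]⟩

/-- For `a > 0` and positive numbers `λ_1, …, λ_{n+1}` with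
`j(2a+j−1)λ_j λ_{j+1} = 1` (`j = 1, …, n`), the real symmetric tridiagonal matrix with
diagonal entries `(j+a)λ_{j+1}` (`j = 0, …, n`) and off-diagonal entries `−1/2` is
positive definite. -/
theorem stmt_16 (a : ℝ) (ha : 0 < a) (n : ℕ) (lam : ℕ → ℝ)
    (hlam : ∀ j, 1 ≤ j → j ≤ n + 1 → 0 < lam j)
    (hrec : ∀ j, 1 ≤ j → j ≤ n → (j : ℝ) * (2 * a + j - 1) * lam j * lam (j + 1) = 1) :
    (Matrix.of fun i j : Fin (n + 1) =>
      if i = j then ((i : ℕ) + a) * lam ((i : ℕ) + 1)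
      else if (i : ℕ) + 1 = (j : ℕ) ∨ (j : ℕ) + 1 = (i : ℕ) then -(1 / 2 : ℝ)
      else 0).PosDef := by
  refine posDef_symmTridiag_of_pivots (d := fun i => (i + a) * lam (i + 1))
    (s := fun j => (2 * a + j) * lam (j + 1) / 2) (fun j hj => ?_) (by push_cast; ring)
    (fun j hj => ?_)
  · have := hlam (j + 1) (by omega) (by omega)
    positivity
  · have hj1 := hlam (j + 1) (by omega) (by omega)
    have hrec' := hrec (j + 1) (by omega) (by omega)
    push_cast at hrec' ⊢
    field_simp
    linear_combination hrec'
end
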